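/- arXiv:2505.03301 — 12 statements merged into one kernel-verified Lean document; each statement's English description precedes it below -/
import Mathlib

section
/- Let I, J be nonempty closed intervals in ℝ and let φ: J → I be well-regulated. Then for every regulated function f: I → ℝ, the composition f ∘ φ is regulated on J. -/
/-!
Near `t₀`, on one side, `φ(t)` tends to `L = φ(t₀±)`, which lies in `I` because `I` is closed, and
by well-regulatedness it does so either from one fixed side of `L` or by being constant. In the
first case `f ∘ φ` inherits the corresponding one-sided limit of `f` at `L`; in the second it is
eventually the constant `f L`.
-/

open Set Filter Topology

/-- `f` is regulated on the interval `I`: at every point of `I`, the one-sided limits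
within `I` exist (whenever the corresponding one-sided within-`I` filter is nontrivial). -/
def RegulatedWithin (f : ℝ → ℝ) (I : Set ℝ) : Prop :=
  ∀ t₀ ∈ I,
    ((𝓝[I ∩ Set.Ioi t₀] t₀).NeBot → ∃ L : ℝ, Tendsto f (𝓝[I ∩ Set.Ioi t₀] t₀) (𝓝 L)) ∧
    ((𝓝[I ∩ Set.Iio t₀] t₀).NeBot → ∃ L : ℝ, Tendsto f (𝓝[I ∩ Set.Iio t₀] t₀) (𝓝 L))

/-- `φ` is well-regulated on the interval `I`: it is regulated and, at every point `t₀` of `I`,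
locally on each side of `t₀` (when nontrivial), `φ` is either everywhere strictly greater than,
everywhere equal to, or everywhere strictly less than the corresponding one-sided limit. -/
def WellRegulatedWithin (φ : ℝ → ℝ) (I : Set ℝ) : Prop :=
  RegulatedWithin φ I ∧
    ∀ t₀ ∈ I,
      ((𝓝[I ∩ Set.Ioi t₀] t₀).NeBot →
        ∃ L : ℝ, Tendsto φ (𝓝[I ∩ Set.Ioi t₀] t₀) (𝓝 L) ∧
          ∃ ε > (0 : ℝ), (∀ t ∈ I ∩ Set.Ioo t₀ (t₀ + ε), L < φ t) ∨
            (∀ t ∈ I ∩ Set.Ioo t₀ (t₀ + ε), φ t = L) ∨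
            (∀ t ∈ I ∩ Set.Ioo t₀ (t₀ + ε), φ t < L)) ∧
      ((𝓝[I ∩ Set.Iio t₀] t₀).NeBot →
        ∃ L : ℝ, Tendsto φ (𝓝[I ∩ Set.Iio t₀] t₀) (𝓝 L) ∧
          ∃ ε > (0 : ℝ), (∀ t ∈ I ∩ Set.Ioo (t₀ - ε) t₀, L < φ t) ∨
            (∀ t ∈ I ∩ Set.Ioo (t₀ - ε) t₀, φ t = L) ∨
            (∀ t ∈ I ∩ Set.Ioo (t₀ - ε) t₀, φ t < L))

section

variable {α β : Type*} {F : Filter α}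

lemma Filter.eventually_trichotomy_of_mem [LT β] {s : Set α} (hs : s ∈ F) {φ : α → β} {L : β}
    (h : (∀ t ∈ s, L < φ t) ∨ (∀ t ∈ s, φ t = L) ∨ (∀ t ∈ s, φ t < L)) :
    (∀ᶠ t in F, L < φ t) ∨ (∀ᶠ t in F, φ t = L) ∨ (∀ᶠ t in F, φ t < L) :=
  h.imp (eventually_of_mem hs) (Or.imp (eventually_of_mem hs) (eventually_of_mem hs))

lemma Set.MapsTo.eventually_mem_nhdsWithin_inter [TopologicalSpace α] {J : Set α} {I : Set β}
    {φ : α → β} (h : MapsTo φ J I) (s : Set α) (t₀ : α) : ∀ᶠ t in 𝓝[J ∩ s] t₀, φ t ∈ I :=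
  eventually_of_mem self_mem_nhdsWithin fun _ ht => h ht.1

end

lemma inter_Ioo_mem_nhdsWithin_inter_Ioi (J : Set ℝ) {t₀ ε : ℝ} (hε : 0 < ε) :
    J ∩ Ioo t₀ (t₀ + ε) ∈ 𝓝[J ∩ Ioi t₀] t₀ := by
  have h := inter_mem_nhdsWithin (J ∩ Ioi t₀) (Iio_mem_nhds (lt_add_of_pos_right t₀ hε))
  rwa [inter_assoc, Ioi_inter_Iio] at h

lemma inter_Ioo_mem_nhdsWithin_inter_Iio (J : Set ℝ) {t₀ ε : ℝ} (hε : 0 < ε) :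
    J ∩ Ioo (t₀ - ε) t₀ ∈ 𝓝[J ∩ Iio t₀] t₀ := by
  have h := inter_mem_nhdsWithin (J ∩ Iio t₀) (Ioi_mem_nhds (sub_lt_self t₀ hε))
  rwa [inter_assoc, Iio_inter_Ioi] at h

namespace RegulatedWithin

variable {α : Type*} {f : ℝ → ℝ} {I : Set ℝ} {φ : α → ℝ} {F : Filter α} {L : ℝ}

lemma exists_tendsto_comp_of_gt [F.NeBot] (hf : RegulatedWithin f I) (hLI : L ∈ I)
    (hL : Tendsto φ F (𝓝 L)) (hmem : ∀ᶠ t in F, φ t ∈ I) (hgt : ∀ᶠ t in F, L < φ t) :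
    ∃ M, Tendsto (f ∘ φ) F (𝓝 M) := by
  have hφ : Tendsto φ F (𝓝[I ∩ Ioi L] L) :=
    tendsto_nhdsWithin_of_tendsto_nhds_of_eventually_within φ hL (hmem.and hgt)
  obtain ⟨M, hM⟩ := (hf L hLI).1 (neBot_of_le hφ)
  exact ⟨M, hM.comp hφ⟩

lemma exists_tendsto_comp_of_lt [F.NeBot] (hf : RegulatedWithin f I) (hLI : L ∈ I)
    (hL : Tendsto φ F (𝓝 L)) (hmem : ∀ᶠ t in F, φ t ∈ I) (hlt : ∀ᶠ t in F, φ t < L) :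
    ∃ M, Tendsto (f ∘ φ) F (𝓝 M) := by
  have hφ : Tendsto φ F (𝓝[I ∩ Iio L] L) :=
    tendsto_nhdsWithin_of_tendsto_nhds_of_eventually_within φ hL (hmem.and hlt)
  obtain ⟨M, hM⟩ := (hf L hLI).2 (neBot_of_le hφ)
  exact ⟨M, hM.comp hφ⟩

lemma exists_tendsto_comp [F.NeBot] (hf : RegulatedWithin f I) (hIcl : IsClosed I)
    (hL : Tendsto φ F (𝓝 L)) (hmem : ∀ᶠ t in F, φ t ∈ I)
    (htri : (∀ᶠ t in F, L < φ t) ∨ (∀ᶠ t in F, φ t = L) ∨ (∀ᶠ t in F, φ t < L)) :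
    ∃ M, Tendsto (f ∘ φ) F (𝓝 M) := by
  have hLI : L ∈ I := hIcl.mem_of_tendsto hL hmem
  rcases htri with hgt | heq | hlt
  · exact hf.exists_tendsto_comp_of_gt hLI hL hmem hgt
  · exact ⟨f L, tendsto_const_nhds.congr' (heq.mono fun t ht => by simp [ht])⟩
  · exact hf.exists_tendsto_comp_of_lt hLI hL hmem hlt

end RegulatedWithin

theorem stmt_1_general (I J : Set ℝ)
    (hIcl : IsClosed I)
    (φ : ℝ → ℝ) (hφmaps : Set.MapsTo φ J I) (hφ : WellRegulatedWithin φ J) :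
    ∀ f : ℝ → ℝ, RegulatedWithin f I → RegulatedWithin (f ∘ φ) J := by
  intro f hf t₀ ht₀
  refine ⟨fun hnb => ?_, fun hnb => ?_⟩
  · obtain ⟨L, hL, ε, hε, htri⟩ := (hφ.2 t₀ ht₀).1 hnb
    exact hf.exists_tendsto_comp hIcl hL (hφmaps.eventually_mem_nhdsWithin_inter _ t₀)
      (eventually_trichotomy_of_mem (inter_Ioo_mem_nhdsWithin_inter_Ioi J hε) htri)
  · obtain ⟨L, hL, ε, hε, htri⟩ := (hφ.2 t₀ ht₀).2 hnb
    exact hf.exists_tendsto_comp hIcl hL (hφmaps.eventually_mem_nhdsWithin_inter _ t₀)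
      (eventually_trichotomy_of_mem (inter_Ioo_mem_nhdsWithin_inter_Iio J hε) htri)

/-- If `I, J` are nonempty closed intervals and `φ : J → I` is well-regulated, then for every
regulated `f : I → ℝ`, the composition `f ∘ φ` is regulated on `J`. -/
theorem stmt_1 (I J : Set ℝ) (hIne : I.Nonempty) (hJne : J.Nonempty)
    (hIcl : IsClosed I) (hJcl : IsClosed J) (hIoc : I.OrdConnected) (hJoc : J.OrdConnected)
    (φ : ℝ → ℝ) (hφmaps : Set.MapsTo φ J I) (hφ : WellRegulatedWithin φ J) :
    ∀ f : ℝ → ℝ, RegulatedWithin f I → RegulatedWithin (f ∘ φ) J :=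
  stmt_1_general I J hIcl φ hφmaps hφ
end

section
/- Let I, J be nonempty closed intervals in ℝ and φ: J → I a function such that f ∘ φ is regulated for every regulated function f: I → ℝ. Then φ is well-regulated. -/
/-!
The identity and the step functions `1_{[L, ∞)}` and `1_{(L, ∞)}` are monotone, hence regulated.
Composing the identity with `φ` shows that `φ` is regulated. Composed with `φ`, the two step
functions take only the values `0` and `1`, so their one-sided limits exist only if they are
eventually constant on that side; together they decide whether `φ > L`, `φ = L` or `φ < L` there.
-/

open Set Filter Topology

theorem RegulatedWithin.of_tendsto_nhdsGT_nhdsLT {f : ℝ → ℝ} (I : Set ℝ)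
    (hGT : ∀ t₀, ∃ L, Tendsto f (𝓝[>] t₀) (𝓝 L)) (hLT : ∀ t₀, ∃ L, Tendsto f (𝓝[<] t₀) (𝓝 L)) :
    RegulatedWithin f I := fun t₀ _ =>
  ⟨fun _ => (hGT t₀).imp fun _ h => h.mono_left (nhdsWithin_mono _ inter_subset_right),
    fun _ => (hLT t₀).imp fun _ h => h.mono_left (nhdsWithin_mono _ inter_subset_right)⟩

theorem Monotone.regulatedWithin {f : ℝ → ℝ} (hf : Monotone f) (I : Set ℝ) :
    RegulatedWithin f I :=
  .of_tendsto_nhdsGT_nhdsLT I (fun t₀ => ⟨_, hf.tendsto_nhdsGT t₀⟩)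
    fun t₀ => ⟨_, hf.tendsto_nhdsLT t₀⟩

theorem IsUpperSet.monotone_indicator_one {α : Type*} [Preorder α] {s : Set α}
    (hs : IsUpperSet s) : Monotone (s.indicator (1 : α → ℝ)) := by
  intro a b hab
  by_cases ha : a ∈ s
  · simp [ha, hs hab ha]
  · simp only [indicator_of_notMem ha]
    exact indicator_nonneg (fun _ _ => zero_le_one) b

theorem eventually_mem_or_eventually_notMem_of_tendsto_indicator {α : Type*} {l : Filter α}
    {g : α → ℝ} {s : Set ℝ} {M : ℝ} (h : Tendsto (s.indicator 1 ∘ g) l (𝓝 M)) :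
    (∀ᶠ t in l, g t ∈ s) ∨ ∀ᶠ t in l, g t ∉ s := by
  by_contra! ⟨hout, hin⟩
  have hM₁ : M = 1 := tendsto_nhds_unique_of_frequently_eq h tendsto_const_nhds
    (hin.mono fun t ht => by simp [ht])
  have hM₀ : M = 0 := tendsto_nhds_unique_of_frequently_eq h tendsto_const_nhds
    (hout.mono fun t ht => by simp [ht])
  exact one_ne_zero (hM₁.symm.trans hM₀)

theorem eventually_trichotomy_of_tendsto_monotone_comp {α : Type*} {l : Filter α} {φ : α → ℝ}
    (hφ : ∀ f : ℝ → ℝ, Monotone f → ∃ M, Tendsto (f ∘ φ) l (𝓝 M)) (L : ℝ) :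
    (∀ᶠ t in l, L < φ t) ∨ (∀ᶠ t in l, φ t = L) ∨ ∀ᶠ t in l, φ t < L := by
  obtain ⟨_, hge⟩ := hφ _ (isUpperSet_Ici L).monotone_indicator_one
  obtain ⟨_, hgt⟩ := hφ _ (isUpperSet_Ioi L).monotone_indicator_one
  rcases eventually_mem_or_eventually_notMem_of_tendsto_indicator hge with hge | hlt
  · rcases eventually_mem_or_eventually_notMem_of_tendsto_indicator hgt with hgt | hle
    · exact .inl hgt
    · exact .inr <| .inl <| (hge.and hle).mono fun t ⟨h₁, h₂⟩ => le_antisymm (not_lt.mp h₂) h₁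
  · exact .inr <| .inr <| hlt.mono fun t h => not_le.mp h

theorem exists_pos_forall_Ioo_of_eventually_nhdsWithin_inter_Ioi {J : Set ℝ} {t₀ : ℝ}
    {p : ℝ → Prop} (h : ∀ᶠ t in 𝓝[J ∩ Ioi t₀] t₀, p t) :
    ∃ ε > 0, ∀ t ∈ J ∩ Ioo t₀ (t₀ + ε), p t := by
  obtain ⟨ε, hε, hball⟩ := Metric.eventually_nhds_iff.mp (eventually_nhdsWithin_iff.mp h)
  refine ⟨ε, hε, fun t ⟨htJ, ht⟩ => hball ?_ ⟨htJ, ht.1⟩⟩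
  rw [Real.dist_eq, abs_lt]
  constructor <;> linarith [ht.1, ht.2]

theorem exists_pos_forall_Ioo_of_eventually_nhdsWithin_inter_Iio {J : Set ℝ} {t₀ : ℝ}
    {p : ℝ → Prop} (h : ∀ᶠ t in 𝓝[J ∩ Iio t₀] t₀, p t) :
    ∃ ε > 0, ∀ t ∈ J ∩ Ioo (t₀ - ε) t₀, p t := by
  obtain ⟨ε, hε, hball⟩ := Metric.eventually_nhds_iff.mp (eventually_nhdsWithin_iff.mp h)
  refine ⟨ε, hε, fun t ⟨htJ, ht⟩ => hball ?_ ⟨htJ, ht.2⟩⟩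
  rw [Real.dist_eq, abs_lt]
  constructor <;> linarith [ht.1, ht.2]

theorem stmt_2_general (I J : Set ℝ) (φ : ℝ → ℝ)
    (hcomp : ∀ f : ℝ → ℝ, RegulatedWithin f I → RegulatedWithin (f ∘ φ) J) :
    WellRegulatedWithin φ J := by
  have hφ : RegulatedWithin φ J := hcomp id (monotone_id.regulatedWithin I)
  refine ⟨hφ, fun t₀ ht₀ => ⟨fun hne => ?_, fun hne => ?_⟩⟩
  · obtain ⟨L, hL⟩ := (hφ t₀ ht₀).1 hne
    refine ⟨L, hL, ?_⟩
    rcases eventually_trichotomy_of_tendsto_monotone_comp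
      (fun f hf => (hcomp f (hf.regulatedWithin I) t₀ ht₀).1 hne) L with h | h | h
    all_goals obtain ⟨ε, hε, hp⟩ := exists_pos_forall_Ioo_of_eventually_nhdsWithin_inter_Ioi h
    exacts [⟨ε, hε, .inl hp⟩, ⟨ε, hε, .inr (.inl hp)⟩, ⟨ε, hε, .inr (.inr hp)⟩]
  · obtain ⟨L, hL⟩ := (hφ t₀ ht₀).2 hne
    refine ⟨L, hL, ?_⟩
    rcases eventually_trichotomy_of_tendsto_monotone_comp
      (fun f hf => (hcomp f (hf.regulatedWithin I) t₀ ht₀).2 hne) L with h | h | h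
    all_goals obtain ⟨ε, hε, hp⟩ := exists_pos_forall_Ioo_of_eventually_nhdsWithin_inter_Iio h
    exacts [⟨ε, hε, .inl hp⟩, ⟨ε, hε, .inr (.inl hp)⟩, ⟨ε, hε, .inr (.inr hp)⟩]

/-- If `I, J` are nonempty closed intervals and `φ : J → I` is such that `f ∘ φ` is regulated
on `J` for every regulated `f : I → ℝ`, then `φ` is well-regulated on `J`. -/
theorem stmt_2 (I J : Set ℝ) (hIne : I.Nonempty) (hJne : J.Nonempty)
    (hIcl : IsClosed I) (hJcl : IsClosed J) (hIoc : I.OrdConnected) (hJoc : J.OrdConnected)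
    (φ : ℝ → ℝ) (hφmaps : Set.MapsTo φ J I)
    (hcomp : ∀ f : ℝ → ℝ, RegulatedWithin f I → RegulatedWithin (f ∘ φ) J) :
    WellRegulatedWithin φ J :=
  stmt_2_general I J φ hcomp
end

section
/- There exist well-regulated functions f, g: ℝ → ℝ whose sum f + g is not well-regulated. Concretely, f defined by f(0) = 0 and f(t) = -t·(1 - (1/2)·sin(1/t)) for t ≠ 0 is well-regulated, the identity function is well-regulated, but f + id is not well-regulated. -/
/-!
Away from `0` the function `f` is real-analytic, and an analytic function is either locally
constant or, by isolated zeros and the intermediate value theorem, strictly above or strictly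
below its value on each side. Near `0`, `f t` lies between `-t/2` and `-3t/2`, so it tends to `0`
and has the sign of `-t`. The sum `f t + t = (t/2)·sin(1/t)` also tends to `0` at `0⁺`, but it
vanishes at `1/(nπ)` and is positive at `1/(π/2 + 2nπ)`, so it has no one-sided sign there.
-/

open Set Filter Topology

/-- `f : ℝ → ℝ` is well-regulated: at every point both one-sided limits exist and, locally on
each side, `f` is either everywhere strictly greater than, everywhere equal to, or everywhere
strictly less than the corresponding one-sided limit. -/
def WellRegulated (f : ℝ → ℝ) : Prop :=
  ∀ t₀ : ℝ,
    (∃ L : ℝ, Tendsto f (𝓝[>] t₀) (𝓝 L) ∧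
      ∃ ε > (0 : ℝ), (∀ t ∈ Set.Ioo t₀ (t₀ + ε), L < f t) ∨
        (∀ t ∈ Set.Ioo t₀ (t₀ + ε), f t = L) ∨
        (∀ t ∈ Set.Ioo t₀ (t₀ + ε), f t < L)) ∧
    (∃ L : ℝ, Tendsto f (𝓝[<] t₀) (𝓝 L) ∧
      ∃ ε > (0 : ℝ), (∀ t ∈ Set.Ioo (t₀ - ε) t₀, L < f t) ∨
        (∀ t ∈ Set.Ioo (t₀ - ε) t₀, f t = L) ∨
        (∀ t ∈ Set.Ioo (t₀ - ε) t₀, f t < L))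

def IsRegularAlong (f : ℝ → ℝ) (l : Filter ℝ) : Prop :=
  ∃ L, Tendsto f l (𝓝 L) ∧ ((∀ᶠ t in l, L < f t) ∨ (∀ᶠ t in l, f t = L) ∨ ∀ᶠ t in l, f t < L)

def WellRegulatedAt (f : ℝ → ℝ) (t₀ : ℝ) : Prop :=
  IsRegularAlong f (𝓝[>] t₀) ∧ IsRegularAlong f (𝓝[<] t₀)

section Regularity

variable {f : ℝ → ℝ} {a : ℝ}

lemma eventually_nhdsGT_iff_exists_Ioo {p : ℝ → Prop} :
    (∀ᶠ t in 𝓝[>] a, p t) ↔ ∃ ε > 0, ∀ t ∈ Ioo a (a + ε), p t := by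
  refine mem_nhdsGT_iff_exists_Ioo_subset.trans ⟨?_, ?_⟩
  · rintro ⟨u, hu, hsub⟩
    exact ⟨u - a, sub_pos.2 hu, by rwa [add_sub_cancel]⟩
  · rintro ⟨ε, hε, hsub⟩
    exact ⟨a + ε, lt_add_of_pos_right a hε, hsub⟩

lemma eventually_nhdsLT_iff_exists_Ioo {p : ℝ → Prop} :
    (∀ᶠ t in 𝓝[<] a, p t) ↔ ∃ ε > 0, ∀ t ∈ Ioo (a - ε) a, p t := by
  refine mem_nhdsLT_iff_exists_Ioo_subset.trans ⟨?_, ?_⟩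
  · rintro ⟨l, hl, hsub⟩
    exact ⟨a - l, sub_pos.2 hl, by rwa [sub_sub_cancel]⟩
  · rintro ⟨ε, hε, hsub⟩
    exact ⟨a - ε, sub_lt_self a hε, hsub⟩

lemma wellRegulated_iff_forall_wellRegulatedAt :
    WellRegulated f ↔ ∀ t₀, WellRegulatedAt f t₀ := by
  simp only [WellRegulated, WellRegulatedAt, IsRegularAlong, eventually_nhdsGT_iff_exists_Ioo,
    eventually_nhdsLT_iff_exists_Ioo, and_or_left, exists_or]

lemma isRegularAlong_map_iff {φ : ℝ → ℝ} {l : Filter ℝ} :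
    IsRegularAlong f (map φ l) ↔ IsRegularAlong (f ∘ φ) l :=
  Iff.rfl

lemma eventually_pos_or_eventually_neg_nhdsGT
    (h : ∀ᶠ t in 𝓝[>] a, ContinuousAt f t ∧ f t ≠ 0) :
    (∀ᶠ t in 𝓝[>] a, 0 < f t) ∨ ∀ᶠ t in 𝓝[>] a, f t < 0 := by
  obtain ⟨ε, hε, hmem⟩ := eventually_nhdsGT_iff_exists_Ioo.1 h
  have hcont : ContinuousOn f (Ioo a (a + ε)) := fun t ht => (hmem t ht).1.continuousWithinAt
  suffices (∀ t ∈ Ioo a (a + ε), 0 < f t) ∨ ∀ t ∈ Ioo a (a + ε), f t < 0 by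
    have hI : Ioo a (a + ε) ∈ 𝓝[>] a := Ioo_mem_nhdsGT (lt_add_of_pos_right a hε)
    exact this.imp (eventually_of_mem hI) (eventually_of_mem hI)
  by_contra! ⟨⟨x, hx, hfx⟩, ⟨y, hy, hfy⟩⟩
  obtain ⟨z, hz, hfz⟩ := isPreconnected_Ioo.intermediate_value hx hy hcont ⟨hfx, hfy⟩
  exact (hmem z hz).2 hfz

lemma AnalyticAt.isRegularAlong_nhdsGT (hf : AnalyticAt ℝ f a) : IsRegularAlong f (𝓝[>] a) := by
  refine ⟨f a, hf.continuousAt.continuousWithinAt, ?_⟩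
  have hg : AnalyticAt ℝ (fun t => f t - f a) a := hf.sub analyticAt_const
  rcases hg.eventually_eq_zero_or_eventually_ne_zero with hconst | hne
  · exact .inr (.inl ((hconst.filter_mono nhdsWithin_le_nhds).mono fun t => sub_eq_zero.1))
  have hcont : ∀ᶠ t in 𝓝[>] a, ContinuousAt (fun t => f t - f a) t :=
    nhdsWithin_le_nhds (hg.eventually_analyticAt.mono fun t ht => ht.continuousAt)
  have hne' : ∀ᶠ t in 𝓝[>] a, f t - f a ≠ 0 :=
    nhdsWithin_mono a (fun t (ht : a < t) => ht.ne') hne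
  rcases eventually_pos_or_eventually_neg_nhdsGT (hcont.and hne') with hpos | hneg
  · exact .inl (hpos.mono fun t => sub_pos.1)
  · exact .inr (.inr (hneg.mono fun t => sub_neg.1))

lemma AnalyticAt.isRegularAlong_nhdsLT (hf : AnalyticAt ℝ f a) : IsRegularAlong f (𝓝[<] a) := by
  have hneg : AnalyticAt ℝ (f ∘ Neg.neg) (-a) := hf.comp_of_eq analyticAt_id.neg (neg_neg a)
  rw [← neg_neg a, ← neg_nhdsGT, ← Filter.map_neg, isRegularAlong_map_iff]
  exact hneg.isRegularAlong_nhdsGT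

lemma AnalyticAt.wellRegulatedAt (hf : AnalyticAt ℝ f a) : WellRegulatedAt f a :=
  ⟨hf.isRegularAlong_nhdsGT, hf.isRegularAlong_nhdsLT⟩

lemma not_isRegularAlong_of_frequently {l : Filter ℝ} [l.NeBot] {L : ℝ}
    (hL : Tendsto f l (𝓝 L)) (heq : ∃ᶠ t in l, f t = L) (hne : ∃ᶠ t in l, f t ≠ L) :
    ¬ IsRegularAlong f l := by
  rintro ⟨L', hL', hcases⟩
  obtain rfl : L' = L := tendsto_nhds_unique hL' hL
  rcases hcases with hgt | heq' | hlt
  · exact heq (hgt.mono fun t ht => ht.ne')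
  · exact hne (heq'.mono fun t ht => not_not_intro ht)
  · exact heq (hlt.mono fun t ht => ht.ne)

end Regularity

/-- The junk value `1 / 0 = 0` makes this vanish at `0`. -/
noncomputable def oscillatingWedge (t : ℝ) : ℝ := -t * (1 - 1 / 2 * Real.sin (1 / t))

lemma one_sub_half_sin_pos (x : ℝ) : 0 < 1 - 1 / 2 * Real.sin x := by
  linarith [Real.sin_le_one x]

lemma analyticAt_oscillatingWedge {t : ℝ} (ht : t ≠ 0) : AnalyticAt ℝ oscillatingWedge t :=
  analyticAt_id.neg.mul (analyticAt_const.sub (analyticAt_const.mul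
    (Real.analyticAt_sin.comp (analyticAt_const.div analyticAt_id ht))))

lemma tendsto_oscillatingWedge_zero : Tendsto oscillatingWedge (𝓝 0) (𝓝 0) := by
  refine (continuous_neg.tendsto' 0 0 neg_zero).zero_mul_isBoundedUnder_le
    (isBoundedUnder_of ⟨3 / 2, fun t => ?_⟩)
  have := Real.neg_one_le_sin (1 / t)
  rw [Function.comp_apply, Real.norm_of_nonneg (one_sub_half_sin_pos _).le]
  linarith

lemma wellRegulatedAt_oscillatingWedge_zero : WellRegulatedAt oscillatingWedge 0 := by
  refine ⟨⟨0, tendsto_oscillatingWedge_zero.mono_left nhdsWithin_le_nhds, .inr (.inr ?_)⟩,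
    ⟨0, tendsto_oscillatingWedge_zero.mono_left nhdsWithin_le_nhds, .inl ?_⟩⟩
  · filter_upwards [self_mem_nhdsWithin] with t (ht : 0 < t)
    exact mul_neg_of_neg_of_pos (neg_neg_of_pos ht) (one_sub_half_sin_pos _)
  · filter_upwards [self_mem_nhdsWithin] with t (ht : t < 0)
    exact mul_pos (neg_pos_of_neg ht) (one_sub_half_sin_pos _)

lemma wellRegulated_oscillatingWedge : WellRegulated oscillatingWedge := by
  refine wellRegulated_iff_forall_wellRegulatedAt.2 fun t => ?_
  rcases eq_or_ne t 0 with rfl | ht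
  · exact wellRegulatedAt_oscillatingWedge_zero
  · exact (analyticAt_oscillatingWedge ht).wellRegulatedAt

lemma oscillatingWedge_add_self (t : ℝ) : oscillatingWedge t + t = t / 2 * Real.sin (1 / t) := by
  rw [oscillatingWedge]
  ring

lemma frequently_sin_one_div_eq {x : ℕ → ℝ} {c : ℝ} (hx : Tendsto x atTop atTop)
    (hc : ∀ n, Real.sin (x n) = c) : ∃ᶠ t in 𝓝[>] 0, Real.sin (1 / t) = c :=
  (tendsto_inv_atTop_nhdsGT_zero.comp hx).frequently (.of_forall fun n => by simp [hc])

lemma not_isRegularAlong_half_mul_sin_one_div :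
    ¬ IsRegularAlong (fun t => t / 2 * Real.sin (1 / t)) (𝓝[>] 0) := by
  have hpos : ∀ᶠ t : ℝ in 𝓝[>] 0, 0 < t := self_mem_nhdsWithin
  have hzero : ∃ᶠ t in 𝓝[>] 0, Real.sin (1 / t) = 0 :=
    frequently_sin_one_div_eq (tendsto_natCast_atTop_atTop.atTop_mul_const Real.pi_pos)
      Real.sin_nat_mul_pi
  have hone : ∃ᶠ t in 𝓝[>] 0, Real.sin (1 / t) = 1 :=
    frequently_sin_one_div_eq (tendsto_atTop_add_const_left _ (Real.pi / 2)
      (tendsto_natCast_atTop_atTop.atTop_mul_const Real.two_pi_pos))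
      fun n => by rw [Real.sin_add_nat_mul_two_pi, Real.sin_pi_div_two]
  have hlim : Tendsto (fun t => t / 2 * Real.sin (1 / t)) (𝓝[>] 0) (𝓝 0) := by
    simpa only [id_eq, oscillatingWedge_add_self, add_zero] using
      (tendsto_oscillatingWedge_zero.add tendsto_id).mono_left nhdsWithin_le_nhds
  refine not_isRegularAlong_of_frequently hlim (hzero.mono fun t ht => by rw [ht, mul_zero]) ?_
  refine (hone.and_eventually hpos).mono fun t ⟨ht, htpos⟩ => ?_
  rw [ht, mul_one]
  exact (half_pos htpos).ne'

/-- The function `f` with `f(0) = 0` and `f(t) = -t·(1 - (1/2)·sin(1/t))` for `t ≠ 0` is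
well-regulated, the identity is well-regulated, but `f + id` is not well-regulated. -/
theorem stmt_3 (f : ℝ → ℝ) (hf0 : f 0 = 0)
    (hf : ∀ t : ℝ, t ≠ 0 → f t = -t * (1 - (1 / 2) * Real.sin (1 / t))) :
    WellRegulated f ∧ WellRegulated (fun t : ℝ => t) ∧
      ¬ WellRegulated (fun t : ℝ => f t + t) := by
  obtain rfl : f = oscillatingWedge := funext fun t => by
    rcases eq_or_ne t 0 with rfl | ht
    · simp [hf0, oscillatingWedge]
    · exact hf t ht
  refine ⟨wellRegulated_oscillatingWedge,
    wellRegulated_iff_forall_wellRegulatedAt.2 fun _ => analyticAt_id.wellRegulatedAt, fun h => ?_⟩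
  simp only [oscillatingWedge_add_self] at h
  exact not_isRegularAlong_half_mul_sin_one_div (wellRegulated_iff_forall_wellRegulatedAt.1 h 0).1
end

section
/- Let X₁ ⊆ ℝ^{d₁}, X₂ ⊆ ℝ^{d₂}, m ∈ ℕ*, and g: X₁ → X₂. Then g is Lebesgue-Lebesgue measurable if and only if for every Lebesgue-Borel measurable f: X₂ → ℝ^m, the composition f ∘ g is Lebesgue-Borel measurable. -/
/-! Since `g` maps `X₁` into `X₂`, the trace `X₁ ∩ g⁻¹' A` only depends on the trace `X₂ ∩ A`,
so the restriction `A ⊆ X₂` in the left-hand side is harmless and the forward direction is the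
composition of preimages. Conversely, if `X₂ ∩ A = X₂ ∩ S` with `S` Lebesgue measurable, the
indicator `f = 𝟙_S : ℝ^{d₂} → ℝ^m` (nonzero since `m ≥ 1`) is (𝔏, 𝔅)-measurable and
`(f ∘ g)⁻¹' {𝟙} = g⁻¹' S` has the same trace on `X₁` as `g⁻¹' A`. -/

open MeasureTheory Set

/-- A set `A` is Lebesgue measurable in the subspace `X` (trace of the Lebesgue σ-algebra,
i.e. of the completion of the Borel σ-algebra w.r.t. Lebesgue measure) if it coincides,
within `X`, with an ambient Lebesgue measurable (= null measurable) set. -/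
def TraceLebesgueMeasurable {d : ℕ} (X A : Set (Fin d → ℝ)) : Prop :=
  ∃ S : Set (Fin d → ℝ), NullMeasurableSet S (volume : Measure (Fin d → ℝ)) ∧ X ∩ A = X ∩ S

/-- `f : X → ℝ^m` is (𝔏, 𝔅)-measurable: the preimage of every Borel set is Lebesgue
measurable in `X`. -/
def LBMeasurableOn {d m : ℕ} (f : (Fin d → ℝ) → (Fin m → ℝ)) (X : Set (Fin d → ℝ)) : Prop :=
  ∀ B : Set (Fin m → ℝ), MeasurableSet B → TraceLebesgueMeasurable X (f ⁻¹' B)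

theorem Set.MapsTo.inter_preimage_congr {α β : Type*} {g : α → β} {X₁ : Set α} {X₂ A A' : Set β}
    (hg : MapsTo g X₁ X₂) (h : X₂ ∩ A = X₂ ∩ A') : X₁ ∩ g ⁻¹' A = X₁ ∩ g ⁻¹' A' := by
  ext x
  refine and_congr_right fun hx => ?_
  simpa [hg hx] using Set.ext_iff.mp h (g x)

theorem Set.indicator_const_preimage_singleton {α M : Type*} [Zero M] (S : Set α) {c : M}
    (hc : c ≠ 0) : S.indicator (fun _ => c) ⁻¹' {c} = S := by
  ext x
  by_cases hx : x ∈ S <;> simp [hx, hc.symm]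

section TraceLebesgue

variable {d : ℕ}

theorem traceLebesgueMeasurable_congr {X A A' : Set (Fin d → ℝ)} (h : X ∩ A = X ∩ A') :
    TraceLebesgueMeasurable X A ↔ TraceLebesgueMeasurable X A' := by
  simp only [TraceLebesgueMeasurable, h]

theorem MeasureTheory.NullMeasurableSet.traceLebesgueMeasurable {S : Set (Fin d → ℝ)}
    (hS : NullMeasurableSet S) (X : Set (Fin d → ℝ)) : TraceLebesgueMeasurable X S :=
  ⟨S, hS, rfl⟩

theorem MeasureTheory.NullMeasurable.lbMeasurableOn {m : ℕ} {f : (Fin d → ℝ) → (Fin m → ℝ)}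
    (hf : NullMeasurable f) (X : Set (Fin d → ℝ)) : LBMeasurableOn f X :=
  fun _ hB => (hf hB).traceLebesgueMeasurable X

end TraceLebesgue

theorem traceLebesgueMeasurable_preimage_of_subset {d₁ d₂ : ℕ} {X₁ : Set (Fin d₁ → ℝ)}
    {X₂ : Set (Fin d₂ → ℝ)} {g : (Fin d₁ → ℝ) → (Fin d₂ → ℝ)} (hg : MapsTo g X₁ X₂)
    (h : ∀ A ⊆ X₂, TraceLebesgueMeasurable X₂ A → TraceLebesgueMeasurable X₁ (g ⁻¹' A))
    {A : Set (Fin d₂ → ℝ)} (hA : TraceLebesgueMeasurable X₂ A) :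
    TraceLebesgueMeasurable X₁ (g ⁻¹' A) := by
  have hA' : X₂ ∩ (X₂ ∩ A) = X₂ ∩ A := by
    rw [← inter_assoc, inter_self]
  exact (traceLebesgueMeasurable_congr (hg.inter_preimage_congr hA')).mp
    (h _ inter_subset_left ((traceLebesgueMeasurable_congr hA').mpr hA))

/-- Let `X₁ ⊆ ℝ^{d₁}`, `X₂ ⊆ ℝ^{d₂}`, `m ≥ 1`, and `g : X₁ → X₂`. Then `g` is (𝔏, 𝔏)-measurable
if and only if for every (𝔏, 𝔅)-measurable `f : X₂ → ℝ^m`, the composition `f ∘ g`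
is (𝔏, 𝔅)-measurable. -/
theorem stmt_4 {d₁ d₂ m : ℕ} (hm : 0 < m)
    (X₁ : Set (Fin d₁ → ℝ)) (X₂ : Set (Fin d₂ → ℝ))
    (g : (Fin d₁ → ℝ) → (Fin d₂ → ℝ)) (hg : Set.MapsTo g X₁ X₂) :
    (∀ A : Set (Fin d₂ → ℝ), A ⊆ X₂ → TraceLebesgueMeasurable X₂ A →
        TraceLebesgueMeasurable X₁ (g ⁻¹' A)) ↔
      (∀ f : (Fin d₂ → ℝ) → (Fin m → ℝ), LBMeasurableOn f X₂ → LBMeasurableOn (f ∘ g) X₁) := by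
  refine ⟨fun h f hf B hB => traceLebesgueMeasurable_preimage_of_subset hg h (hf B hB), ?_⟩
  rintro h A - ⟨S, hS, hAS⟩
  have : NeZero m := NeZero.of_pos hm
  set f : (Fin d₂ → ℝ) → (Fin m → ℝ) := S.indicator fun _ => 1
  have hf : LBMeasurableOn f X₂ :=
    NullMeasurable.lbMeasurableOn (measurable_const.indicator hS) X₂
  have hfS : f ⁻¹' {1} = S := S.indicator_const_preimage_singleton one_ne_zero
  obtain ⟨T, hT, hST⟩ := h f hf {1} (measurableSet_singleton 1)
  rw [Set.preimage_comp, hfS] at hST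
  exact ⟨T, hT, (hg.inter_preimage_congr hAS).trans hST⟩
end

section
/- Let X₁ ⊆ ℝ^{d₁}, X₂ ⊆ ℝ^{d₂} be open sets, m ∈ ℕ*, and g: X₁ → X₂. The following are equivalent: (i) for every f ∈ L^∞(X₂, ℝ^m), f ∘ g defines an element of L^∞(X₁, ℝ^m); (ii) g is Lebesgue-Lebesgue measurable and the pushforward g_#𝓛 of the Lebesgue measure is absolutely continuous with respect to the Lebesgue measure. -/
open MeasureTheory Set Filter
open scoped ENNReal

/-!
Testing (i) on indicators `A.indicator (fun _ ↦ c)` with `c ≠ 0` gives (ii): such an indicator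
is in `L^∞`, so its composition with `g`, the indicator of `g ⁻¹' A`, is a.e. measurable; and when
`A` is null it is a.e. equal to `0`, so `g ⁻¹' A` is null.

Conversely, the null-set half of (ii) says `Tendsto g (ae μ) (ae ν)`, the form of `g_# μ ≪ ν`
that does not presuppose measurability of `g`. It pulls `ν`-a.e. statements about `f` back to
`μ`-a.e. statements about `f ∘ g`, which gives well-definedness on classes and
`‖f ∘ g‖_∞ ≤ ‖f‖_∞`; measurability of `f ∘ g` comes from composing a measurable representative
of `f` with `g`.
-/

theorem Set.MapsTo.inter_preimage_inter {α β : Type*} {s : Set α} {t : Set β} {g : α → β}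
    (hg : MapsTo g s t) (A : Set β) : s ∩ g ⁻¹' (A ∩ t) = s ∩ g ⁻¹' A := by
  rw [preimage_inter, ← inter_assoc, inter_right_comm, inter_eq_left.2 hg.subset_preimage]

namespace MeasureTheory

variable {α β E : Type*} [MeasurableSpace α] [MeasurableSpace β] {μ : Measure α} {ν : Measure β}
  {g : α → β}

theorem tendsto_ae_iff_measure_preimage_null :
    Tendsto g (ae μ) (ae ν) ↔ ∀ A, ν A = 0 → μ (g ⁻¹' A) = 0 := by
  refine ⟨fun h A hA => ?_, fun h s hs => ?_⟩
  · simpa using mem_ae_iff.1 (h (compl_mem_ae_iff.2 hA))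
  · exact mem_ae_iff.2 (h _ (mem_ae_iff.1 hs))

theorem tendsto_ae_iff_comp_ae_congr [Zero E] [Nontrivial E] :
    Tendsto g (ae μ) (ae ν) ↔ ∀ f f' : β → E, f =ᵐ[ν] f' → f ∘ g =ᵐ[μ] f' ∘ g := by
  refine ⟨fun h f f' hf => hf.comp_tendsto h, fun h s hs => ?_⟩
  obtain ⟨c, hc⟩ := exists_ne (0 : E)
  have hsc : sᶜ.indicator (fun _ => c) =ᵐ[ν] 0 := by
    filter_upwards [hs] with y hy
    simp [hy]
  change ∀ᵐ x ∂μ, g x ∈ s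
  filter_upwards [h _ _ hsc] with x hx
  by_contra hxs
  simp [hxs, hc] at hx

theorem eLpNormEssSup_comp_le_of_tendsto_ae [ENorm E] {f : β → E}
    (hg : Tendsto g (ae μ) (ae ν)) : eLpNormEssSup (f ∘ g) μ ≤ eLpNormEssSup f ν :=
  essSup_le_of_ae_le _ (hg.eventually ae_le_eLpNormEssSup)

section Normed

variable [NormedAddCommGroup E] [MeasurableSpace E] [BorelSpace E] [SecondCountableTopology E]

theorem AEStronglyMeasurable.comp_nullMeasurable_of_tendsto_ae {f : β → E}
    (hf : AEStronglyMeasurable f ν) (hg : NullMeasurable g μ) (hgae : Tendsto g (ae μ) (ae ν)) :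
    AEStronglyMeasurable (f ∘ g) μ :=
  ((hf.stronglyMeasurable_mk.measurable.comp_nullMeasurable hg).aemeasurable
    |>.aestronglyMeasurable).congr (hf.ae_eq_mk.symm.comp_tendsto hgae)

theorem MemLp.comp_nullMeasurable_of_tendsto_ae {f : β → E} (hf : MemLp f ∞ ν)
    (hg : NullMeasurable g μ) (hgae : Tendsto g (ae μ) (ae ν)) : MemLp (f ∘ g) ∞ μ := by
  refine ⟨hf.1.comp_nullMeasurable_of_tendsto_ae hg hgae, ?_⟩
  calc eLpNorm (f ∘ g) ∞ μ = eLpNormEssSup (f ∘ g) μ := eLpNorm_exponent_top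
    _ ≤ eLpNormEssSup f ν := eLpNormEssSup_comp_le_of_tendsto_ae hgae
    _ = eLpNorm f ∞ ν := eLpNorm_exponent_top.symm
    _ < ∞ := hf.2

theorem nullMeasurableSet_preimage_of_forall_memLp_top_comp [Nontrivial E]
    (h : ∀ f : β → E, MemLp f ∞ ν → MemLp (f ∘ g) ∞ μ) {A : Set β}
    (hA : NullMeasurableSet A ν) : NullMeasurableSet (g ⁻¹' A) μ := by
  obtain ⟨c, hc⟩ := exists_ne (0 : E)
  have : NeZero c := ⟨hc⟩
  have hf : MemLp (A.indicator fun _ => c) ∞ ν :=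
    memLp_top_of_bound ((aemeasurable_indicator_const_iff c).2 hA).aestronglyMeasurable ‖c‖
      (Eventually.of_forall fun _ => norm_indicator_le_norm_self _ _)
  exact (aemeasurable_indicator_const_iff c).1 (h _ hf).1.aemeasurable

theorem forall_memLp_top_comp_and_ae_congr_iff [Nontrivial E] :
    ((∀ f : β → E, MemLp f ∞ ν → MemLp (f ∘ g) ∞ μ) ∧
      (∀ f f' : β → E, f =ᵐ[ν] f' → f ∘ g =ᵐ[μ] f' ∘ g)) ↔
    (∀ A, NullMeasurableSet A ν → NullMeasurableSet (g ⁻¹' A) μ) ∧ Tendsto g (ae μ) (ae ν) := by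
  rw [← tendsto_ae_iff_comp_ae_congr (E := E)]
  refine ⟨fun ⟨hLp, hgae⟩ => ⟨fun A => nullMeasurableSet_preimage_of_forall_memLp_top_comp hLp,
    hgae⟩, fun ⟨hmeas, hgae⟩ => ⟨fun f hf => ?_, hgae⟩⟩
  exact hf.comp_nullMeasurable_of_tendsto_ae (fun B hB => hmeas B hB.nullMeasurableSet) hgae

end Normed

variable {s : Set α} {t : Set β}

theorem forall_nullMeasurableSet_preimage_restrict_iff (hs : MeasurableSet s)
    (ht : MeasurableSet t) (hg : MapsTo g s t) :
    (∀ A, NullMeasurableSet A (ν.restrict t) → NullMeasurableSet (g ⁻¹' A) (μ.restrict s)) ↔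
      ∀ A ⊆ t, NullMeasurableSet A ν → NullMeasurableSet (s ∩ g ⁻¹' A) μ := by
  simp only [nullMeasurableSet_restrict hs.nullMeasurableSet,
    nullMeasurableSet_restrict ht.nullMeasurableSet, inter_comm _ s]
  refine ⟨fun h A hAt hA => h A (by rwa [inter_eq_left.2 hAt]), fun h A hA => ?_⟩
  rw [← hg.inter_preimage_inter]
  exact h _ inter_subset_right hA

theorem tendsto_ae_restrict_iff (hs : MeasurableSet s) (ht : MeasurableSet t)
    (hg : MapsTo g s t) :
    Tendsto g (ae (μ.restrict s)) (ae (ν.restrict t)) ↔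
      ∀ A ⊆ t, ν A = 0 → μ (s ∩ g ⁻¹' A) = 0 := by
  simp only [tendsto_ae_iff_measure_preimage_null, Measure.restrict_apply' hs,
    Measure.restrict_apply' ht, inter_comm _ s]
  refine ⟨fun h A hAt hA => h A (by rwa [inter_eq_left.2 hAt]), fun h A hA => ?_⟩
  rw [← hg.inter_preimage_inter]
  exact h _ inter_subset_right hA

end MeasureTheory

/-- Let `X₁ ⊆ ℝ^{d₁}` and `X₂ ⊆ ℝ^{d₂}` be open, `m ≥ 1`, and `g : X₁ → X₂`. The following
are equivalent:
(i) for every `f ∈ L^∞(X₂, ℝ^m)`, `f ∘ g` defines an element of `L^∞(X₁, ℝ^m)` (in particular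
composition with `g` respects a.e. equivalence classes);
(ii) `g` is (𝔏, 𝔏)-measurable and the pushforward `g_#𝓛` of the Lebesgue measure on `X₁` by `g`
is absolutely continuous with respect to the Lebesgue measure. -/
theorem stmt_5 {d₁ d₂ m : ℕ} (hm : 0 < m)
    (X₁ : Set (Fin d₁ → ℝ)) (X₂ : Set (Fin d₂ → ℝ)) (hX₁ : IsOpen X₁) (hX₂ : IsOpen X₂)
    (g : (Fin d₁ → ℝ) → (Fin d₂ → ℝ)) (hg : Set.MapsTo g X₁ X₂) :
    ((∀ f : (Fin d₂ → ℝ) → (Fin m → ℝ), MemLp f ⊤ (volume.restrict X₂) →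
        MemLp (f ∘ g) ⊤ (volume.restrict X₁)) ∧
     (∀ f f' : (Fin d₂ → ℝ) → (Fin m → ℝ), f =ᵐ[volume.restrict X₂] f' →
        f ∘ g =ᵐ[volume.restrict X₁] f' ∘ g)) ↔
    ((∀ A : Set (Fin d₂ → ℝ), A ⊆ X₂ → NullMeasurableSet A volume →
        NullMeasurableSet (X₁ ∩ g ⁻¹' A) volume) ∧
     (∀ A : Set (Fin d₂ → ℝ), A ⊆ X₂ → volume A = 0 → volume (X₁ ∩ g ⁻¹' A) = 0)) := by
  have : NeZero m := ⟨hm.ne'⟩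
  rw [forall_memLp_top_comp_and_ae_congr_iff,
    forall_nullMeasurableSet_preimage_restrict_iff hX₁.measurableSet hX₂.measurableSet hg,
    tendsto_ae_restrict_iff hX₁.measurableSet hX₂.measurableSet hg]
end

section
/- Let τ: ℝ₊ → (0, ∞) be a delay function satisfying inf_{s ∈ [0,t]} τ(s) > 0 for every t ≥ 0. Define Dₙ recursively by D₀ = ℝ, Dₙ = {t ∈ ℝ₊ : t − τ(t) ∈ Dₙ₋₁}. Then the intersection of all Dₙ over n ∈ ℕ is empty. -/
/-!
A point `t` of `Dₙ₊₁` can be delayed `n` times without leaving `[0, t]`, and each delay costs at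
least `δ = inf_{[0, t]} τ > 0`, so `n δ ≤ t` for every `n`, which is absurd.
-/

open Set

/-- The sets `Dₙ` on which the `n`-th iterated delay function is defined:
`D₀ = ℝ`, `Dₙ = {t ∈ ℝ₊ : t − τ(t) ∈ Dₙ₋₁}`. -/
def Dset (τ : ℝ → ℝ) : ℕ → Set ℝ
  | 0 => Set.univ
  | n + 1 => {t : ℝ | 0 ≤ t ∧ t - τ t ∈ Dset τ n}

/-- The iterated delay functions: `σ₀ = id`, `σₙ(t) = σₙ₋₁(t − τ(t))`. -/
def iterDelay (τ : ℝ → ℝ) : ℕ → ℝ → ℝ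
  | 0 => fun t => t
  | n + 1 => fun t => iterDelay τ n (t - τ t)

lemma natCast_mul_le_of_mem_Dset_succ {τ : ℝ → ℝ} {T δ : ℝ} (hδ : 0 ≤ δ)
    (hτ : ∀ s ∈ Icc 0 T, δ ≤ τ s) (n : ℕ) {t : ℝ} (htT : t ≤ T) (ht : t ∈ Dset τ (n + 1)) :
    n * δ ≤ t := by
  induction n generalizing t with
  | zero => simpa using ht.1
  | succ n ih =>
    obtain ⟨ht0, hdelayed⟩ := ht
    have hδt : δ ≤ τ t := hτ t ⟨ht0, htT⟩
    have := ih (by linarith) hdelayed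
    push_cast
    linarith

theorem stmt_9_general (τ : ℝ → ℝ)
    (hinf : ∀ t : ℝ, 0 ≤ t → ∃ δ > (0 : ℝ), ∀ s ∈ Set.Icc (0 : ℝ) t, δ ≤ τ s) :
    ⋂ n : ℕ, Dset τ n = ∅ := by
  refine eq_empty_of_forall_notMem fun t ht => ?_
  have hmem : ∀ n, t ∈ Dset τ n := mem_iInter.1 ht
  obtain ⟨δ, hδ, hτ⟩ := hinf t (hmem 1).1
  obtain ⟨n, hn⟩ := exists_nat_gt (t / δ)
  have hle := natCast_mul_le_of_mem_Dset_succ hδ.le hτ n le_rfl (hmem (n + 1))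
  linarith [(div_lt_iff₀ hδ).1 hn]

/-- If the delay function `τ` satisfies `inf_{s ∈ [0, t]} τ(s) > 0` for every `t ≥ 0`,
then the intersection of all the sets `Dₙ` is empty. -/
theorem stmt_9 (τ : ℝ → ℝ) (hτ : ∀ t : ℝ, 0 ≤ t → 0 < τ t)
    (hinf : ∀ t : ℝ, 0 ≤ t → ∃ δ > (0 : ℝ), ∀ s ∈ Set.Icc (0 : ℝ) t, δ ≤ τ s) :
    ⋂ n : ℕ, Dset τ n = ∅ :=
  stmt_9_general τ hinf
end

section
/- Let τ be a delay function with inf_{s∈[0,t]} τ(s) > 0 for all t ≥ 0, σ₁(t) = t − τ(t), and n: ℝ → ℕ the function with t ∈ D_{n(t)} \ D_{n(t)+1} for all t. Then for every t ∈ ℝ₊: (a) n(t) ≥ 1; (b) n(σ₁(t)) = n(t) − 1; (c) σ_k(t) ≥ 0 for every k ∈ {0, ..., n(t)−1}; (d) σ_{n(t)}(t) ∈ [−h(0), 0), where h(0) = −inf_{s≥0}(s − τ(s)) (with σ_{n(t)}(t) > −∞ understood when h(0) = ∞). -/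
/-! Since the sets `Dₖ` decrease, the defining property of `n` says exactly that
`t ∈ Dₖ ↔ k ≤ n(t)`. All four claims are read off this characterization, together with
`D_{k+1} = {t ∈ Dₖ : σₖ(t) ≥ 0}` and `σ_{k+1}(t) = σₖ(t) − τ(σₖ(t))`. -/

open Set

namespace Dset

variable {τ : ℝ → ℝ}

theorem mem_succ {n : ℕ} {t : ℝ} : t ∈ Dset τ (n + 1) ↔ 0 ≤ t ∧ t - τ t ∈ Dset τ n :=
  Iff.rfl

theorem succ_subset : ∀ n, Dset τ (n + 1) ⊆ Dset τ n
  | 0 => fun _ _ => trivial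
  | n + 1 => fun _ ht => ⟨ht.1, succ_subset n ht.2⟩

theorem antitone : Antitone (Dset τ) :=
  antitone_nat_of_succ_le succ_subset

theorem mem_succ_iff_iterDelay_nonneg :
    ∀ {k : ℕ} {t : ℝ}, t ∈ Dset τ (k + 1) ↔ t ∈ Dset τ k ∧ 0 ≤ iterDelay τ k t
  | 0, _ => ⟨fun ht => ⟨trivial, ht.1⟩, fun ht => ⟨ht.2, trivial⟩⟩
  | _ + 1, _ => by
    rw [mem_succ, mem_succ_iff_iterDelay_nonneg (t := _ - _), ← and_assoc]
    rfl

end Dset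

theorem iterDelay_succ' (τ : ℝ → ℝ) :
    ∀ (k : ℕ) (t : ℝ), iterDelay τ (k + 1) t = iterDelay τ k t - τ (iterDelay τ k t)
  | 0, _ => rfl
  | k + 1, t => iterDelay_succ' τ k (t - τ t)

def IsDsetLevel (τ : ℝ → ℝ) (nfun : ℝ → ℕ) : Prop :=
  ∀ t : ℝ, t ∈ Dset τ (nfun t) ∧ t ∉ Dset τ (nfun t + 1)

namespace IsDsetLevel

variable {τ : ℝ → ℝ} {nfun : ℝ → ℕ}

theorem mem_Dset_iff (hn : IsDsetLevel τ nfun) {k : ℕ} {t : ℝ} :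
    t ∈ Dset τ k ↔ k ≤ nfun t := by
  refine ⟨fun ht => ?_, fun hk => Dset.antitone hk (hn t).1⟩
  by_contra! hk
  exact (hn t).2 (Dset.antitone hk ht)

theorem apply_sub_delay (hn : IsDsetLevel τ nfun) {t : ℝ} (ht : 0 ≤ t) :
    nfun (t - τ t) = nfun t - 1 := by
  have shift : ∀ k, k ≤ nfun (t - τ t) ↔ k + 1 ≤ nfun t := fun k => by
    rw [← hn.mem_Dset_iff, ← hn.mem_Dset_iff, Dset.mem_succ, and_iff_right ht]
  have upper := (shift _).1 le_rfl
  have lower := (shift (nfun t - 1)).2 (by have := (shift 0).1 (Nat.zero_le _); omega)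
  omega

end IsDsetLevel

theorem stmt_11_general (τ : ℝ → ℝ)
    (nfun : ℝ → ℕ) (hn : ∀ t : ℝ, t ∈ Dset τ (nfun t) ∧ t ∉ Dset τ (nfun t + 1)) :
    ∀ t : ℝ, 0 ≤ t →
      1 ≤ nfun t ∧
      nfun (t - τ t) = nfun t - 1 ∧
      (∀ k : ℕ, k ≤ nfun t - 1 → 0 ≤ iterDelay τ k t) ∧
      (iterDelay τ (nfun t) t < 0 ∧
        ∀ m : ℝ, (∀ s : ℝ, 0 ≤ s → m ≤ s - τ s) → m ≤ iterDelay τ (nfun t) t) := by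
  have level : IsDsetLevel τ nfun := hn
  intro t ht
  have mem_iff : ∀ {k}, t ∈ Dset τ k ↔ k ≤ nfun t := level.mem_Dset_iff
  have one_le : 1 ≤ nfun t := mem_iff.1 ⟨ht, trivial⟩
  have nonneg : ∀ k, k ≤ nfun t - 1 → 0 ≤ iterDelay τ k t := fun k hk =>
    (Dset.mem_succ_iff_iterDelay_nonneg.1 (mem_iff.2 (by omega))).2
  refine ⟨one_le, level.apply_sub_delay ht, nonneg, ?_, fun m hm => ?_⟩
  · by_contra! h
    have := mem_iff.1 (Dset.mem_succ_iff_iterDelay_nonneg.2 ⟨(hn t).1, h⟩)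
    omega
  · obtain ⟨j, hj⟩ : ∃ j, nfun t = j + 1 := ⟨nfun t - 1, by omega⟩
    rw [hj, iterDelay_succ']
    exact hm _ (nonneg j (by omega))

/-- Properties of the counting function `n`: for every `t ≥ 0`, (a) `n(t) ≥ 1`;
(b) `n(t − τ(t)) = n(t) − 1`; (c) `σ_k(t) ≥ 0` for `k ∈ {0, …, n(t)−1}`;
(d) `σ_{n(t)}(t) ∈ [−h(0), 0)`, where the membership in `[−h(0), 0)` is expressed as:
`σ_{n(t)}(t) < 0` and `σ_{n(t)}(t)` is above every lower bound of `{s − τ(s) : s ≥ 0}`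
(so that the lower bound is vacuous when `h(0) = ∞`). -/
theorem stmt_11 (τ : ℝ → ℝ) (hτ : ∀ t : ℝ, 0 ≤ t → 0 < τ t)
    (hinf : ∀ t : ℝ, 0 ≤ t → ∃ δ > (0 : ℝ), ∀ s ∈ Set.Icc (0 : ℝ) t, δ ≤ τ s)
    (nfun : ℝ → ℕ) (hn : ∀ t : ℝ, t ∈ Dset τ (nfun t) ∧ t ∉ Dset τ (nfun t + 1)) :
    ∀ t : ℝ, 0 ≤ t →
      1 ≤ nfun t ∧
      nfun (t - τ t) = nfun t - 1 ∧
      (∀ k : ℕ, k ≤ nfun t - 1 → 0 ≤ iterDelay τ k t) ∧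
      (iterDelay τ (nfun t) t < 0 ∧
        ∀ m : ℝ, (∀ s : ℝ, 0 ≤ s → m ≤ s - τ s) → m ≤ iterDelay τ (nfun t) t) :=
  stmt_11_general τ nfun hn
end

section
/- Let A be a real d×d matrix, τ a delay function with inf_{s∈[0,t]} τ(s) > 0 for all t ≥ 0, and x: [−h(0), ∞) → ℝ^d a function satisfying x(t) = A·x(t − τ(t)) for every t ≥ 0. Then for every t ∈ ℝ₊ and every k ∈ {0, ..., n(t)}, we have x(t) = A^k · x(σ_k(t)). In particular, x(t) = A^{n(t)} · x₀(σ_{n(t)}(t)) for every t ≥ 0, where x₀ is the restriction of x to [−h(0), 0). -/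
open Set

theorem Dset_succ_subset (τ : ℝ → ℝ) (n : ℕ) : Dset τ (n + 1) ⊆ Dset τ n := by
  induction n with
  | zero => exact subset_univ _
  | succ n ih => exact fun t ⟨ht₀, ht⟩ => ⟨ht₀, ih ht⟩

theorem Dset_antitone (τ : ℝ → ℝ) : Antitone (Dset τ) :=
  antitone_nat_of_succ_le (Dset_succ_subset τ)

theorem eq_pow_mulVec_iterDelay {ι R : Type*} [Fintype ι] [DecidableEq ι] [Semiring R]
    (A : Matrix ι ι R) (τ : ℝ → ℝ) (x : ℝ → ι → R)
    (hx : ∀ t : ℝ, 0 ≤ t → x t = A.mulVec (x (t - τ t))) :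
    ∀ (k : ℕ) (t : ℝ), t ∈ Dset τ k → x t = (A ^ k).mulVec (x (iterDelay τ k t))
  | 0, t, _ => by simp [iterDelay]
  | k + 1, t, ⟨ht₀, ht⟩ =>
    calc x t = A.mulVec (x (t - τ t)) := hx t ht₀
      _ = A.mulVec ((A ^ k).mulVec (x (iterDelay τ k (t - τ t)))) := by
          rw [← eq_pow_mulVec_iterDelay A τ x hx k _ ht]
      _ = (A ^ (k + 1)).mulVec (x (iterDelay τ (k + 1) t)) := by
          rw [Matrix.mulVec_mulVec, ← pow_succ']; rfl

theorem stmt_13_general {d : ℕ} (A : Matrix (Fin d) (Fin d) ℝ) (τ : ℝ → ℝ)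
    (nfun : ℝ → ℕ) (hn : ∀ t : ℝ, t ∈ Dset τ (nfun t) ∧ t ∉ Dset τ (nfun t + 1))
    (x : ℝ → Fin d → ℝ) (hx : ∀ t : ℝ, 0 ≤ t → x t = A.mulVec (x (t - τ t))) :
    ∀ t : ℝ, 0 ≤ t →
      (∀ k : ℕ, k ≤ nfun t → x t = (A ^ k).mulVec (x (iterDelay τ k t))) ∧
      x t = (A ^ nfun t).mulVec (x (iterDelay τ (nfun t) t)) := by
  intro t _
  have hrep := eq_pow_mulVec_iterDelay A τ x hx
  exact ⟨fun k hk => hrep k t (Dset_antitone τ hk (hn t).1), hrep _ t (hn t).1⟩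

/-- Representation formula: if `x` satisfies `x(t) = A·x(t − τ(t))` for every `t ≥ 0`, then
`x(t) = A^k·x(σ_k(t))` for every `t ≥ 0` and `k ∈ {0, …, n(t)}`; in particular
`x(t) = A^{n(t)}·x₀(σ_{n(t)}(t))` where `x₀` is the restriction of `x` to `[−h(0), 0)`. -/
theorem stmt_13 {d : ℕ} (A : Matrix (Fin d) (Fin d) ℝ) (τ : ℝ → ℝ)
    (hτ : ∀ t : ℝ, 0 ≤ t → 0 < τ t)
    (hinf : ∀ t : ℝ, 0 ≤ t → ∃ δ > (0 : ℝ), ∀ s ∈ Set.Icc (0 : ℝ) t, δ ≤ τ s)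
    (nfun : ℝ → ℕ) (hn : ∀ t : ℝ, t ∈ Dset τ (nfun t) ∧ t ∉ Dset τ (nfun t + 1))
    (x : ℝ → Fin d → ℝ) (hx : ∀ t : ℝ, 0 ≤ t → x t = A.mulVec (x (t - τ t))) :
    ∀ t : ℝ, 0 ≤ t →
      (∀ k : ℕ, k ≤ nfun t → x t = (A ^ k).mulVec (x (iterDelay τ k t))) ∧
      x t = (A ^ nfun t).mulVec (x (iterDelay τ (nfun t) t)) :=
  stmt_13_general A τ nfun hn x hx
end

section
/- Let A be a nonzero real d×d matrix and τ a delay function, σ₁(t) = t − τ(t). Suppose there exists a function x: [−h(0), ∞) → ℝ^d such that for every x̃ equal to x almost everywhere, x̃(t) = A·x̃(t − τ(t)) for almost every t ≥ 0. Then σ₁ maps Lebesgue-null sets to sets with Lebesgue-null preimage: 𝓛(σ₁⁻¹(N)) = 0 for every Lebesgue measurable N with 𝓛(N) = 0. -/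
open MeasureTheory Set

/-!
Perturbing the solution on a null set `N` by a vector `v` with `A v ≠ 0` gives another a.e.
representative of it. Wherever `σ₁ t ∈ N`, the two representatives agree at `t` but their
right-hand sides differ by `A v`, so both equations can hold there only on a null set.
-/

theorem MeasureTheory.measure_preimage_eq_zero_of_forall_ae_eq_solution
    {α E : Type*} [MeasurableSpace α] [AddGroup E] {μ ν : Measure α}
    (hνμ : ν ≪ μ) (σ : α → α) (L : E →+ E) {v : E} (hv : L v ≠ 0) {x : α → E}
    (hx : ∀ x' : α → E, x' =ᵐ[μ] x → ∀ᵐ t ∂ν, x' t = L (x' (σ t)))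
    {N : Set α} (hN : μ N = 0) : ν (σ ⁻¹' N) = 0 := by
  set x' : α → E := x + N.indicator fun _ => v
  have hx'x : x' =ᵐ[μ] x := by
    filter_upwards [measure_eq_zero_iff_ae_notMem.1 hN] with t ht
    simp [x', indicator_of_notMem ht]
  rw [measure_eq_zero_iff_ae_notMem]
  filter_upwards [hx x' hx'x, hx x .rfl, hνμ.ae_le hx'x] with t hx't hxt hx'xt hσt
  have hσ : x' (σ t) = x (σ t) + v := by simp [x', indicator_of_mem (mem_preimage.1 hσt)]
  rw [hx'xt, hσ, map_add, ← hxt] at hx't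
  exact hv (add_eq_left.1 hx't.symm)

theorem Matrix.exists_mulVec_ne_zero {m n R : Type*} [Fintype n] [NonAssocSemiring R]
    {A : Matrix m n R} (hA : A ≠ 0) : ∃ v, A.mulVec v ≠ 0 := by
  contrapose! hA
  exact Matrix.ext_iff_mulVec.2 fun v => by simp [hA v]

theorem stmt_15_general {d : ℕ} (A : Matrix (Fin d) (Fin d) ℝ) (hA : A ≠ 0)
    (τ : ℝ → ℝ)
    (x : ℝ → Fin d → ℝ)
    (hx : ∀ x' : ℝ → Fin d → ℝ, (∀ᵐ t ∂(volume : Measure ℝ), x' t = x t) →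
      ∀ᵐ t ∂((volume : Measure ℝ).restrict (Set.Ici (0 : ℝ))),
        x' t = A.mulVec (x' (t - τ t))) :
    ∀ N : Set ℝ, volume N = 0 → volume {t : ℝ | 0 ≤ t ∧ t - τ t ∈ N} = 0 := by
  intro N hN
  obtain ⟨v, hv⟩ := Matrix.exists_mulVec_ne_zero hA
  have h := measure_preimage_eq_zero_of_forall_ae_eq_solution
    Measure.absolutelyContinuous_restrict (fun t => t - τ t) A.mulVecLin.toAddMonoidHom hv hx hN
  rwa [Measure.restrict_apply' measurableSet_Ici, inter_comm] at h

/-- If `A ≠ 0` and there exists an almost-everywhere solution `x` of the difference equation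
`x(t) = A·x(t − τ(t))` (i.e. every `x̃` equal to `x` a.e. satisfies the equation for a.e.
`t ≥ 0`), then `σ₁(t) = t − τ(t)` has null preimages of null sets:
`𝓛(σ₁⁻¹(N)) = 0` for every Lebesgue-null set `N`. -/
theorem stmt_15 {d : ℕ} (A : Matrix (Fin d) (Fin d) ℝ) (hA : A ≠ 0)
    (τ : ℝ → ℝ) (hτ : ∀ t : ℝ, 0 ≤ t → 0 < τ t)
    (x : ℝ → Fin d → ℝ)
    (hx : ∀ x' : ℝ → Fin d → ℝ, (∀ᵐ t ∂(volume : Measure ℝ), x' t = x t) →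
      ∀ᵐ t ∂((volume : Measure ℝ).restrict (Set.Ici (0 : ℝ))),
        x' t = A.mulVec (x' (t - τ t))) :
    ∀ N : Set ℝ, volume N = 0 → volume {t : ℝ | 0 ≤ t ∧ t - τ t ∈ N} = 0 :=
  stmt_15_general A hA τ x hx
end

section
/- Let A be a real d×d matrix with spectral radius ρ(A) < 1, and τ a delay function satisfying inf_{s∈[0,t]} τ(s) > 0 for all t ≥ 0 and lim_{t→∞}(t − τ(t)) = +∞. Then every solution x: [−h(0), ∞) → ℝ^d of x(t) = A·x(t − τ(t)) (t ≥ 0) with bounded initial condition x₀: [−h(0), 0) → ℝ^d satisfies x(t) → 0 as t → +∞. -/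
/-!
Following the delays backwards gives `x t = A ^ m x s` with `s` an initial time: on `[0, t]` the
step `u ↦ u - τ u` lowers time by at least the positive infimum of `τ` there, so finitely many
steps reach the initial interval, and since `t - τ t → ∞` the number `m` of steps tends to
infinity with `t`. Gelfand's formula turns `ρ(A) < 1` into `A ^ m → 0`, while `x s` stays
bounded.
-/

open Set Filter Topology

/-- `t` belongs to the interval `[−h(0), 0)`, where `h(0) = −inf_{s ≥ 0}(s − τ(s))`:
`t < 0` and `t` is above every lower bound of `{s − τ(s) : s ≥ 0}`. -/
def InNegDom (τ : ℝ → ℝ) (t : ℝ) : Prop :=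
  t < 0 ∧ ∀ m : ℝ, (∀ s : ℝ, 0 ≤ s → m ≤ s - τ s) → m ≤ t

section Delay

variable {E : Type*} (f : E → E) {τ : ℝ → ℝ} {x : ℝ → E}

theorem exists_inNegDom_iterate_of_delay
    (hinf : ∀ t : ℝ, 0 ≤ t → ∃ δ > (0 : ℝ), ∀ s ∈ Icc (0 : ℝ) t, δ ≤ τ s)
    (hx : ∀ t : ℝ, 0 ≤ t → x t = f (x (t - τ t))) {t : ℝ} (ht : 0 ≤ t) :
    ∃ m : ℕ, ∃ s, InNegDom τ s ∧ x t = f^[m] (x s) := by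
  obtain ⟨δ, hδ, hδτ⟩ := hinf t ht
  have reach : ∀ k : ℕ, ∀ u ∈ Icc 0 t, u < k * δ →
      ∃ m : ℕ, ∃ s, InNegDom τ s ∧ x u = f^[m] (x s) := by
    intro k
    induction k with
    | zero =>
      intro u hu hlt
      simp only [Nat.cast_zero, zero_mul] at hlt
      exact absurd hu.1 (not_le.2 hlt)
    | succ k ih =>
      intro u hu hlt
      by_cases hneg : u - τ u < 0
      · exact ⟨1, u - τ u, ⟨hneg, fun m hm => hm u hu.1⟩, hx u hu.1⟩
      · have hstep := hδτ u hu
        push_cast at hlt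
        obtain ⟨m, s, hs, hxs⟩ :=
          ih (u - τ u) ⟨not_lt.1 hneg, by linarith [hu.2]⟩ (by linarith)
        exact ⟨m + 1, s, hs, by rw [hx u hu.1, hxs, Function.iterate_succ_apply']⟩
  obtain ⟨k, hk⟩ := exists_nat_gt (t / δ)
  exact reach k t ⟨ht, le_rfl⟩ (by rwa [div_lt_iff₀ hδ] at hk)

theorem eventually_exists_inNegDom_iterate_ge_of_delay
    (hinf : ∀ t : ℝ, 0 ≤ t → ∃ δ > (0 : ℝ), ∀ s ∈ Icc (0 : ℝ) t, δ ≤ τ s)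
    (hlim : Tendsto (fun t : ℝ => t - τ t) atTop atTop)
    (hx : ∀ t : ℝ, 0 ≤ t → x t = f (x (t - τ t))) (n : ℕ) :
    ∀ᶠ t in atTop, ∃ m ≥ n, ∃ s, InNegDom τ s ∧ x t = f^[m] (x s) := by
  induction n with
  | zero =>
    filter_upwards [eventually_ge_atTop 0] with t ht
    obtain ⟨m, s, hs, hxs⟩ := exists_inNegDom_iterate_of_delay f hinf hx ht
    exact ⟨m, m.zero_le, s, hs, hxs⟩
  | succ n ih =>
    filter_upwards [eventually_ge_atTop 0, hlim.eventually ih] with t ht ⟨m, hmn, s, hs, hxs⟩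
    exact ⟨m + 1, by omega, s, hs, by rw [hx t ht, hxs, Function.iterate_succ_apply']⟩

end Delay

theorem tendsto_pow_atTop_nhds_zero_of_spectralRadius_lt_one {A : Type*} [NormedRing A]
    [NormedAlgebra ℂ A] [CompleteSpace A] {a : A} (ha : spectralRadius ℂ a < 1) :
    Tendsto (fun n : ℕ => a ^ n) atTop (𝓝 0) := by
  obtain ⟨r, hr0, hρr, hr1⟩ := ENNReal.lt_iff_exists_real_btwn.1 ha
  have hr1 : r < 1 := by simpa using hr1
  have hbound : ∀ᶠ n : ℕ in atTop, ‖a ^ n‖ ≤ r ^ n := by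
    filter_upwards [(spectrum.pow_norm_pow_one_div_tendsto_nhds_spectralRadius a
      ).eventually_lt_const hρr, eventually_ge_atTop 1] with n hn hn1
    have hnpos : (0 : ℝ) < n := by exact_mod_cast hn1
    rw [ENNReal.ofReal_lt_ofReal_iff_of_nonneg (by positivity), one_div,
      Real.rpow_inv_lt_iff_of_pos (norm_nonneg _) hr0 hnpos, Real.rpow_natCast] at hn
    exact hn.le
  exact tendsto_zero_iff_norm_tendsto_zero.2 <|
    squeeze_zero' (Eventually.of_forall fun _ => norm_nonneg _) hbound
      (tendsto_pow_atTop_nhds_zero_of_lt_one hr0 hr1)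

attribute [local instance] Matrix.linftyOpNormedRing Matrix.linftyOpNormedAlgebra

theorem Matrix.tendsto_pow_atTop_nhds_zero_of_spectralRadius_lt_one {n : Type*} [Fintype n]
    [DecidableEq n] {A : Matrix n n ℝ}
    (hA : spectralRadius ℂ (A.map fun r : ℝ => (r : ℂ)) < 1) :
    Tendsto (fun k : ℕ => A ^ k) atTop (𝓝 0) := by
  have hre : ∀ k : ℕ, A ^ k = ((A.map fun r : ℝ => (r : ℂ)) ^ k).map Complex.re := by
    intro k
    have hmap : (A.map fun r : ℝ => (r : ℂ)) ^ k = (A ^ k).map fun r : ℝ => (r : ℂ) :=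
      (map_pow Complex.ofRealHom.mapMatrix A k).symm
    ext i j
    simp [hmap]
  have hcont : Continuous fun M : Matrix n n ℂ => M.map Complex.re :=
    continuous_id.matrix_map Complex.continuous_re
  have h :=
    (hcont.tendsto 0).comp (_root_.tendsto_pow_atTop_nhds_zero_of_spectralRadius_lt_one hA)
  rw [Matrix.map_zero _ Complex.zero_re] at h
  exact h.congr fun k => (hre k).symm

theorem Matrix.iterate_mulVec {n : Type*} [Fintype n] [DecidableEq n] {R : Type*} [Semiring R]
    (A : Matrix n n R) (m : ℕ) (v : n → R) : A.mulVec^[m] v = (A ^ m).mulVec v := by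
  induction m with
  | zero => simp
  | succ m ih => rw [Function.iterate_succ_apply', ih, pow_succ', Matrix.mulVec_mulVec]

theorem stmt_16_general {d : ℕ} (A : Matrix (Fin d) (Fin d) ℝ)
    (hA : spectralRadius ℂ (A.map fun r : ℝ => (r : ℂ)) < 1)
    (τ : ℝ → ℝ)
    (hinf : ∀ t : ℝ, 0 ≤ t → ∃ δ > (0 : ℝ), ∀ s ∈ Set.Icc (0 : ℝ) t, δ ≤ τ s)
    (hlim : Tendsto (fun t : ℝ => t - τ t) atTop atTop)
    (x : ℝ → Fin d → ℝ) (hx : ∀ t : ℝ, 0 ≤ t → x t = A.mulVec (x (t - τ t)))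
    (hbdd : ∃ M : ℝ, ∀ t : ℝ, InNegDom τ t → ‖x t‖ ≤ M) :
    Tendsto x atTop (𝓝 (0 : Fin d → ℝ)) := by
  obtain ⟨M, hM⟩ := hbdd
  have hsmall : Tendsto (fun m : ℕ => ‖A ^ m‖ * M) atTop (𝓝 0) := by
    simpa using (Matrix.tendsto_pow_atTop_nhds_zero_of_spectralRadius_lt_one hA).norm.mul_const M
  rw [NormedAddGroup.tendsto_nhds_zero]
  intro ε hε
  obtain ⟨n, hn⟩ := eventually_atTop.1 (hsmall.eventually (gt_mem_nhds hε))
  filter_upwards [eventually_exists_inNegDom_iterate_ge_of_delay A.mulVec hinf hlim hx n]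
    with t ⟨m, hmn, s, hs, hxt⟩
  calc ‖x t‖ = ‖(A ^ m).mulVec (x s)‖ := by rw [hxt, Matrix.iterate_mulVec]
    _ ≤ ‖A ^ m‖ * ‖x s‖ := Matrix.linfty_opNorm_mulVec _ _
    _ ≤ ‖A ^ m‖ * M := by gcongr; exact hM s hs
    _ < ε := hn m hmn

/-- If the spectral radius of `A` (as a complex matrix) is `< 1`, `τ` is a delay function with
`inf_{s ∈ [0,t]} τ(s) > 0` for all `t ≥ 0` and `t − τ(t) → +∞`, then every solution of
`x(t) = A·x(t − τ(t))` with bounded initial condition tends to `0` at `+∞`. -/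
theorem stmt_16 {d : ℕ} (A : Matrix (Fin d) (Fin d) ℝ)
    (hA : spectralRadius ℂ (A.map fun r : ℝ => (r : ℂ)) < 1)
    (τ : ℝ → ℝ) (hτ : ∀ t : ℝ, 0 ≤ t → 0 < τ t)
    (hinf : ∀ t : ℝ, 0 ≤ t → ∃ δ > (0 : ℝ), ∀ s ∈ Set.Icc (0 : ℝ) t, δ ≤ τ s)
    (hlim : Tendsto (fun t : ℝ => t - τ t) atTop atTop)
    (x : ℝ → Fin d → ℝ) (hx : ∀ t : ℝ, 0 ≤ t → x t = A.mulVec (x (t - τ t)))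
    (hbdd : ∃ M : ℝ, ∀ t : ℝ, InNegDom τ t → ‖x t‖ ≤ M) :
    Tendsto x atTop (𝓝 (0 : Fin d → ℝ)) :=
  stmt_16_general A hA τ hinf hlim x hx hbdd
end

section
/- Let A be a real d×d matrix and τ a delay function satisfying inf_{s∈[0,t]} τ(s) > 0 for all t ≥ 0. Suppose every solution of x(t) = A·x(t − τ(t)) with bounded initial condition converges to 0 as t → +∞. Then ρ(A) < 1. If moreover A is not nilpotent, then lim_{t→∞}(t − τ(t)) = +∞. -/
open Set Filter Topology

/-!
Let `μ ≠ 0` be an eigenvalue of `A` with eigenvector `v`, and let `k(t)` be the number of steps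
`s ↦ s − τ(s)` leading from `t` to a negative time. It is finite because `τ` is bounded below by a
positive constant on each `[0, t]`, and `k(t) = k(t − τ(t)) + 1` for `t ≥ 0`. Hence
`z(t) = μ^{k(t)} v` is a solution with constant initial data `v`; its real and imaginary parts are
real solutions with bounded initial data, so `z → 0`, i.e. `|μ|^{k(t)} → 0`. This forces `|μ| < 1`
and `k(t) → ∞`. As `k` is bounded on every half-line `(−∞, C]`, `k(t) → ∞` gives
`t − τ(t) → ∞`. Finally, a non-nilpotent complex matrix has a nonzero eigenvalue.
-/

open Matrix

theorem Matrix.isNilpotent_of_spectrum_subset_zero {n K : Type*} [Fintype n] [DecidableEq n]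
    [Field K] [IsAlgClosed K] (B : Matrix n n K) (hB : spectrum K B ⊆ {0}) :
    IsNilpotent B := by
  have hroots : B.charpoly.roots = Multiset.replicate (Fintype.card n) 0 := by
    refine Multiset.eq_replicate.mpr ⟨?_, fun _ hμ => hB ?_⟩
    · rw [IsAlgClosed.card_roots_eq_natDegree, B.charpoly_natDegree_eq_dim]
    · exact mem_spectrum_iff_isRoot_charpoly.mpr (Polynomial.isRoot_of_mem_roots hμ)
  have hX : B.charpoly = Polynomial.X ^ Fintype.card n := by
    rw [(IsAlgClosed.splits B.charpoly).eq_prod_roots_of_monic B.charpoly_monic, hroots]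
    simp
  exact ⟨Fintype.card n, by simpa [hX] using B.aeval_self_charpoly⟩

theorem spectralRadius_lt_of_forall_lt_of_finite {𝕜 A : Type*} [NormedField 𝕜] [Ring A]
    [Algebra 𝕜 A] {a : A} (hfin : (spectrum 𝕜 a).Finite) {r : ENNReal} (hr : 0 < r)
    (h : ∀ μ ∈ spectrum 𝕜 a, (‖μ‖₊ : ENNReal) < r) : spectralRadius 𝕜 a < r :=
  lt_of_le_of_lt
    (iSup₂_le fun _ hμ => Finset.le_sup (f := fun μ : 𝕜 => (‖μ‖₊ : ENNReal))
      (hfin.mem_toFinset.mpr hμ))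
    ((Finset.sup_lt_iff hr).mpr fun μ hμ => h μ (hfin.mem_toFinset.mp hμ))

theorem lt_one_and_tendsto_atTop_of_tendsto_pow {α : Type*} {l : Filter α} [l.NeBot]
    {r : ℝ} (hr : 0 < r) {k : α → ℕ} (h : Tendsto (fun a => r ^ k a) l (𝓝 0)) :
    r < 1 ∧ Tendsto k l atTop := by
  have hr1 : r < 1 := by
    by_contra! hge
    obtain ⟨a, ha⟩ := (h.eventually_lt_const one_pos).exists
    exact (one_le_pow₀ hge).not_gt ha
  refine ⟨hr1, tendsto_atTop.mpr fun N => ?_⟩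
  filter_upwards [h.eventually_lt_const (pow_pos hr N)] with a ha
  exact ((pow_lt_pow_iff_right_of_lt_one₀ hr hr1).mp ha).le

theorem Matrix.re_map_ofReal_mulVec {m n : Type*} [Fintype n] (A : Matrix m n ℝ) (w : n → ℂ)
    (i : m) : (((A.map fun r : ℝ => (r : ℂ)) *ᵥ w) i).re = (A *ᵥ fun j => (w j).re) i := by
  simp [mulVec, dotProduct, Complex.re_sum]

theorem Matrix.im_map_ofReal_mulVec {m n : Type*} [Fintype n] (A : Matrix m n ℝ) (w : n → ℂ)
    (i : m) : (((A.map fun r : ℝ => (r : ℂ)) *ᵥ w) i).im = (A *ᵥ fun j => (w j).im) i := by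
  simp [mulVec, dotProduct, Complex.im_sum]

theorem pi_norm_re_le {ι : Type*} [Fintype ι] (w : ι → ℂ) : ‖fun i => (w i).re‖ ≤ ‖w‖ :=
  (pi_norm_le_iff_of_nonneg (norm_nonneg w)).mpr fun i =>
    (Complex.abs_re_le_norm (w i)).trans (norm_le_pi_norm w i)

theorem pi_norm_im_le {ι : Type*} [Fintype ι] (w : ι → ℂ) : ‖fun i => (w i).im‖ ≤ ‖w‖ :=
  (pi_norm_le_iff_of_nonneg (norm_nonneg w)).mpr fun i =>
    (Complex.abs_im_le_norm (w i)).trans (norm_le_pi_norm w i)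

def LocallyUniformlyPos (τ : ℝ → ℝ) : Prop :=
  ∀ t, 0 ≤ t → ∃ δ > 0, ∀ s ∈ Icc 0 t, δ ≤ τ s

noncomputable def backStep (τ : ℝ → ℝ) (t : ℝ) : ℝ := if 0 ≤ t then t - τ t else t

/-- The number of backward steps needed to reach a negative time (`0` if it is never reached,
which cannot happen when `LocallyUniformlyPos τ`). -/
noncomputable def exitIndex (τ : ℝ → ℝ) (t : ℝ) : ℕ := sInf {n | (backStep τ)^[n] t < 0}

section exitIndex

variable {τ : ℝ → ℝ}

theorem iterate_backStep_le {C δ s : ℝ} (hδ : 0 ≤ δ) (hτ : ∀ s ∈ Icc 0 C, δ ≤ τ s)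
    (hs : s ≤ C) (n : ℕ) (hn : 0 ≤ (backStep τ)^[n] s) :
    (backStep τ)^[n] s ≤ s - n * δ := by
  induction n with
  | zero => simp
  | succ n ih =>
    rw [Function.iterate_succ_apply'] at hn ⊢
    have hpos : 0 ≤ (backStep τ)^[n] s := by
      by_contra! hneg
      rw [backStep, if_neg hneg.not_ge] at hn
      exact hneg.not_ge hn
    have hle := ih hpos
    have hδτ := hτ _ ⟨hpos, by nlinarith [(n.cast_nonneg : (0 : ℝ) ≤ n)]⟩
    rw [backStep, if_pos hpos]
    push_cast
    linarith

theorem iterate_backStep_neg {C δ s : ℝ} (hδ : 0 < δ) (hτ : ∀ s ∈ Icc 0 C, δ ≤ τ s)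
    (hs : s ≤ C) {N : ℕ} (hN : C < N * δ) : (backStep τ)^[N] s < 0 := by
  by_contra! h
  linarith [iterate_backStep_le hδ.le hτ hs N h]

theorem exitIndex_of_neg {t : ℝ} (ht : t < 0) : exitIndex τ t = 0 :=
  Nat.sInf_eq_zero.mpr (Or.inl ht)

theorem LocallyUniformlyPos.exists_iterate_backStep_neg (hτ : LocallyUniformlyPos τ) (C : ℝ) :
    ∃ N : ℕ, ∀ s ≤ C, (backStep τ)^[N] s < 0 := by
  obtain ⟨δ, hδ, hδτ⟩ := hτ (max C 0) (le_max_right C 0)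
  obtain ⟨N, hN⟩ := exists_nat_gt (max C 0 / δ)
  exact ⟨N, fun s hs => iterate_backStep_neg hδ hδτ (hs.trans (le_max_left C 0))
    ((div_lt_iff₀ hδ).mp hN)⟩

theorem LocallyUniformlyPos.exists_exitIndex_le (hτ : LocallyUniformlyPos τ) (C : ℝ) :
    ∃ N : ℕ, ∀ s ≤ C, exitIndex τ s ≤ N := by
  obtain ⟨N, hN⟩ := hτ.exists_iterate_backStep_neg C
  exact ⟨N, fun s hs => Nat.sInf_le (hN s hs)⟩

theorem LocallyUniformlyPos.exitIndex_of_nonneg (hτ : LocallyUniformlyPos τ) {t : ℝ}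
    (ht : 0 ≤ t) : exitIndex τ t = exitIndex τ (t - τ t) + 1 := by
  obtain ⟨N, hN⟩ := hτ.exists_iterate_backStep_neg t
  have hpos : 1 ≤ exitIndex τ t := by
    refine Nat.one_le_iff_ne_zero.mpr fun h0 => ?_
    rcases Nat.sInf_eq_zero.mp h0 with h | h
    · exact (h : t < 0).not_ge ht
    · exact h.subset (hN t le_rfl)
  rw [exitIndex, ← Nat.sInf_add hpos]
  simp only [Function.iterate_succ_apply, backStep, if_pos ht]
  rfl

theorem LocallyUniformlyPos.tendsto_sub_of_tendsto_exitIndex (hτ : LocallyUniformlyPos τ)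
    (hk : Tendsto (exitIndex τ) atTop atTop) : Tendsto (fun t => t - τ t) atTop atTop := by
  refine tendsto_atTop.mpr fun C => ?_
  obtain ⟨N, hN⟩ := hτ.exists_exitIndex_le C
  filter_upwards [hk.eventually_ge_atTop (N + 2), eventually_ge_atTop 0] with t hkt ht
  by_contra! hlt
  have := hN _ hlt.le
  rw [hτ.exitIndex_of_nonneg ht] at hkt
  omega

end exitIndex

section DelayEquation

variable {d : ℕ} {A : Matrix (Fin d) (Fin d) ℝ} {τ : ℝ → ℝ}

def SolutionsTendstoZero (A : Matrix (Fin d) (Fin d) ℝ) (τ : ℝ → ℝ) : Prop :=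
  ∀ x : ℝ → Fin d → ℝ, (∀ t, 0 ≤ t → x t = A *ᵥ x (t - τ t)) →
    (∃ M, ∀ t, InNegDom τ t → ‖x t‖ ≤ M) → Tendsto x atTop (𝓝 0)

theorem SolutionsTendstoZero.tendsto_complex (hconv : SolutionsTendstoZero A τ)
    {z : ℝ → Fin d → ℂ} (hz : ∀ t, 0 ≤ t → z t = (A.map fun r : ℝ => (r : ℂ)) *ᵥ z (t - τ t))
    {M : ℝ} (hM : ∀ t, InNegDom τ t → ‖z t‖ ≤ M) :
    Tendsto z atTop (𝓝 0) := by
  have hre := hconv (fun t i => (z t i).re)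
    (fun t ht => funext fun i => by rw [hz t ht, re_map_ofReal_mulVec])
    ⟨M, fun t ht => (pi_norm_re_le _).trans (hM t ht)⟩
  have him := hconv (fun t i => (z t i).im)
    (fun t ht => funext fun i => by rw [hz t ht, im_map_ofReal_mulVec])
    ⟨M, fun t ht => (pi_norm_im_le _).trans (hM t ht)⟩
  have hcont : Continuous fun p : (Fin d → ℝ) × (Fin d → ℝ) =>
      fun i => (p.1 i : ℂ) + p.2 i * Complex.I := by
    fun_prop
  exact ((hcont.tendsto' 0 0 (by ext; simp)).comp (hre.prodMk_nhds him)).congr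
    fun t => funext fun i => Complex.re_add_im (z t i)

theorem LocallyUniformlyPos.pow_exitIndex_smul_eq_mulVec {n R : Type*} [Fintype n]
    [CommSemiring R] (hτ : LocallyUniformlyPos τ) {B : Matrix n n R} {μ : R} {v : n → R}
    (hv : B *ᵥ v = μ • v) {t : ℝ} (ht : 0 ≤ t) :
    μ ^ exitIndex τ t • v = B *ᵥ (μ ^ exitIndex τ (t - τ t) • v) := by
  rw [mulVec_smul, hv, smul_smul, ← pow_succ, ← hτ.exitIndex_of_nonneg ht]

theorem SolutionsTendstoZero.norm_lt_one_and_tendsto_exitIndex (hconv : SolutionsTendstoZero A τ)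
    (hτ : LocallyUniformlyPos τ) {μ : ℂ} (hμ : μ ∈ spectrum ℂ (A.map fun r : ℝ => (r : ℂ)))
    (hμ0 : μ ≠ 0) : ‖μ‖ < 1 ∧ Tendsto (exitIndex τ) atTop atTop := by
  have hμ' : μ ∈ spectrum ℂ (toLin' (A.map fun r : ℝ => (r : ℂ))) := by rwa [spectrum_toLin']
  obtain ⟨v, hv⟩ := (Module.End.hasEigenvalue_iff_mem_spectrum.mpr hμ').exists_hasEigenvector
  have hAv : (A.map fun r : ℝ => (r : ℂ)) *ᵥ v = μ • v := by
    rw [← toLin'_apply, hv.apply_eq_smul]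
  have hz := hconv.tendsto_complex (z := fun t => μ ^ exitIndex τ t • v) (M := ‖v‖)
    (fun _ ht => hτ.pow_exitIndex_smul_eq_mulVec hAv ht)
    (fun _ ht => by rw [exitIndex_of_neg ht.1, pow_zero, one_smul])
  have hv0 : ‖v‖ ≠ 0 := norm_ne_zero_iff.mpr hv.2
  refine lt_one_and_tendsto_atTop_of_tendsto_pow (norm_pos_iff.mpr hμ0) ?_
  simpa [norm_smul, hv0] using hz.norm.div_const ‖v‖

end DelayEquation

theorem stmt_17_general {d : ℕ} (A : Matrix (Fin d) (Fin d) ℝ)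
    (τ : ℝ → ℝ)
    (hinf : ∀ t : ℝ, 0 ≤ t → ∃ δ > (0 : ℝ), ∀ s ∈ Set.Icc (0 : ℝ) t, δ ≤ τ s)
    (hconv : ∀ x : ℝ → Fin d → ℝ,
      (∀ t : ℝ, 0 ≤ t → x t = A.mulVec (x (t - τ t))) →
      (∃ M : ℝ, ∀ t : ℝ, InNegDom τ t → ‖x t‖ ≤ M) →
      Tendsto x atTop (𝓝 (0 : Fin d → ℝ))) :
    spectralRadius ℂ (A.map fun r : ℝ => (r : ℂ)) < 1 ∧
      (¬ IsNilpotent A → Tendsto (fun t : ℝ => t - τ t) atTop atTop) := by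
  have hτ : LocallyUniformlyPos τ := hinf
  have hsol : SolutionsTendstoZero A τ := hconv
  constructor
  · refine spectralRadius_lt_of_forall_lt_of_finite (Matrix.finite_spectrum _) one_pos
      fun μ hμ => ?_
    rcases eq_or_ne μ 0 with rfl | hμ0
    · simp
    · exact_mod_cast (hsol.norm_lt_one_and_tendsto_exitIndex hτ hμ hμ0).1
  · intro hA
    obtain ⟨μ, hμ, hμ0⟩ : ∃ μ ∈ spectrum ℂ (A.map fun r : ℝ => (r : ℂ)), μ ≠ 0 := by
      by_contra! h
      exact hA ((IsNilpotent.map_iff (f := Complex.ofRealHom.mapMatrix)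
        (map_injective Complex.ofReal_injective)).mp (isNilpotent_of_spectrum_subset_zero _ h))
    exact hτ.tendsto_sub_of_tendsto_exitIndex
      (hsol.norm_lt_one_and_tendsto_exitIndex hτ hμ hμ0).2

/-- Necessity of the stability conditions: if every solution of `x(t) = A·x(t − τ(t))` with
bounded initial condition converges to `0` at `+∞`, then the spectral radius of `A` is `< 1`;
if moreover `A` is not nilpotent, then `t − τ(t) → +∞`. -/
theorem stmt_17 {d : ℕ} (A : Matrix (Fin d) (Fin d) ℝ)
    (τ : ℝ → ℝ) (hτ : ∀ t : ℝ, 0 ≤ t → 0 < τ t)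
    (hinf : ∀ t : ℝ, 0 ≤ t → ∃ δ > (0 : ℝ), ∀ s ∈ Set.Icc (0 : ℝ) t, δ ≤ τ s)
    (hconv : ∀ x : ℝ → Fin d → ℝ,
      (∀ t : ℝ, 0 ≤ t → x t = A.mulVec (x (t - τ t))) →
      (∃ M : ℝ, ∀ t : ℝ, InNegDom τ t → ‖x t‖ ≤ M) →
      Tendsto x atTop (𝓝 (0 : Fin d → ℝ))) :
    spectralRadius ℂ (A.map fun r : ℝ => (r : ℂ)) < 1 ∧
      (¬ IsNilpotent A → Tendsto (fun t : ℝ => t - τ t) atTop atTop) :=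
  stmt_17_general A τ hinf hconv
end

section
/- Let A be a real d×d matrix with ρ(A) < 1, and τ a delay function satisfying inf_{s∈[0,t]} τ(s) > 0 for all t ≥ 0, such that there exist α > 0 and β ∈ ℝ with n(t) ≥ α·t + β for every t ≥ 0. Then there exist constants C > 0 and γ > 0 such that for every solution x of x(t) = A·x(t − τ(t)) with bounded initial condition x₀: [−h(0), 0) → ℝ^d, we have |x(t)| ≤ C·e^{−γt}·sup_{s ∈ [−h(0),0)} |x₀(s)| for all t ≥ 0. -/
open Set

/-! Unfolding the equation `n(t)` times gives `x(t) = A^{n(t)} x(σ_{n(t)}(t))` with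
`σ_{n(t)}(t) ∈ [−h(0), 0)`. Gelfand's formula gives `‖Aⁿ‖ ≤ C rⁿ` for any `ρ(A) < r < 1`, and
`n(t) ≥ α t + β` turns `r^{n(t)}` into `r^β e^{−γ t}` with `γ = −α log r`. -/

open Filter Asymptotics NNReal Matrix

section IterDelay

variable {τ : ℝ → ℝ}

theorem iterDelay_succ_apply' (n : ℕ) (t : ℝ) :
    iterDelay τ (n + 1) t = iterDelay τ n t - τ (iterDelay τ n t) := by
  induction n generalizing t with
  | zero => rfl
  | succ n ih => exact ih (t - τ t)

theorem mem_Dset_succ_iff' {n : ℕ} {t : ℝ} :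
    t ∈ Dset τ (n + 1) ↔ t ∈ Dset τ n ∧ 0 ≤ iterDelay τ n t := by
  induction n generalizing t with
  | zero => simp [Dset, iterDelay]
  | succ n ih =>
    change 0 ≤ t ∧ t - τ t ∈ Dset τ (n + 1) ↔ (0 ≤ t ∧ t - τ t ∈ Dset τ n) ∧ _
    rw [ih, and_assoc]
    rfl

theorem inNegDom_iterDelay {n : ℕ} {t : ℝ} (ht : 0 ≤ t) (hmem : t ∈ Dset τ n)
    (hnot : t ∉ Dset τ (n + 1)) : InNegDom τ (iterDelay τ n t) := by
  have hneg : iterDelay τ n t < 0 := by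
    simpa [mem_Dset_succ_iff', hmem] using hnot
  obtain ⟨k, rfl⟩ : ∃ k, n = k + 1 := Nat.exists_eq_succ_of_ne_zero <| by
    rintro rfl
    exact hneg.not_ge ht
  have hk : 0 ≤ iterDelay τ k t := (mem_Dset_succ_iff'.1 hmem).2
  refine ⟨hneg, fun m hm => ?_⟩
  rw [iterDelay_succ_apply']
  exact hm _ hk

theorem eq_pow_mulVec_iterDelay_of_mem_Dset {ι R : Type*} [Fintype ι] [DecidableEq ι]
    [Semiring R] {A : Matrix ι ι R} {x : ℝ → ι → R}
    (hx : ∀ t, 0 ≤ t → x t = A *ᵥ x (t - τ t)) {n : ℕ} {t : ℝ} (ht : t ∈ Dset τ n) :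
    x t = (A ^ n) *ᵥ x (iterDelay τ n t) := by
  induction n generalizing t with
  | zero => simp only [pow_zero, one_mulVec]; rfl
  | succ n ih =>
    obtain ⟨ht₀, hstep⟩ := ht
    rw [hx t ht₀, ih hstep, mulVec_mulVec, ← pow_succ']
    rfl

end IterDelay

theorem exists_norm_pow_le_of_spectralRadius_lt {A : Type*} [NormedRing A] [NormedAlgebra ℂ A]
    [CompleteSpace A] (a : A) {r : ℝ≥0} (h : spectralRadius ℂ a < r) :
    ∃ C > 0, ∀ n : ℕ, ‖a ^ n‖ ≤ C * (r : ℝ) ^ n := by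
  have hr : 0 < r := ENNReal.coe_pos.1 (pos_of_gt h)
  have hev : ∀ᶠ n : ℕ in atTop, ‖a ^ n‖ ≤ 1 * ‖(r : ℝ) ^ n‖ := by
    filter_upwards
      [(spectrum.pow_nnnorm_pow_one_div_tendsto_nhds_spectralRadius a).eventually_lt_const h,
        eventually_gt_atTop 0] with n hn hn₀
    have hn' : ‖a ^ n‖₊ < r ^ n := by
      rw [← ENNReal.coe_rpow_of_nonneg _ (by positivity), ENNReal.coe_lt_coe, one_div,
        NNReal.rpow_inv_lt_iff (by positivity), NNReal.rpow_natCast] at hn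
      exact hn
    rw [one_mul, Real.norm_of_nonneg (by positivity)]
    exact_mod_cast hn'.le
  obtain ⟨C, hC, hbound⟩ := bound_of_isBigO_nat_atTop (IsBigO.of_bound 1 hev)
  refine ⟨C, hC, fun n => ?_⟩
  have := hbound (pow_ne_zero n (NNReal.coe_ne_zero.2 hr.ne'))
  rwa [Real.norm_of_nonneg (by positivity)] at this

section LinftyOpNorm

attribute [local instance] Matrix.linftyOpSeminormedAddCommGroup Matrix.linftyOpNormedAddCommGroup
  Matrix.linftyOpNormedRing Matrix.linftyOpNormedAlgebra

theorem Matrix.linfty_opNorm_map_eq {m n α β : Type*} [Fintype m] [Fintype n]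
    [SeminormedAddCommGroup α] [SeminormedAddCommGroup β] (A : Matrix m n α) (f : α → β)
    (hf : ∀ a, ‖f a‖ = ‖a‖) : ‖A.map f‖ = ‖A‖ := by
  have hf' : ∀ a, ‖f a‖₊ = ‖a‖₊ := fun a => NNReal.eq (hf a)
  simp only [linfty_opNorm_def, map_apply, hf']

theorem Matrix.exists_norm_pow_mulVec_le_of_spectralRadius_lt {n : Type*} [Fintype n]
    [DecidableEq n] (A : Matrix n n ℝ) {r : ℝ≥0}
    (h : spectralRadius ℂ (A.map ((↑) : ℝ → ℂ)) < r) :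
    ∃ C > 0, ∀ (k : ℕ) (v : n → ℝ), ‖(A ^ k) *ᵥ v‖ ≤ C * (r : ℝ) ^ k * ‖v‖ := by
  obtain ⟨C, hC, hpow⟩ := exists_norm_pow_le_of_spectralRadius_lt _ h
  refine ⟨C, hC, fun k v => ?_⟩
  have hAk : ‖A ^ k‖ ≤ C * (r : ℝ) ^ k := by
    rw [← linfty_opNorm_map_eq (A ^ k) ((↑) : ℝ → ℂ) Complex.norm_real,
      show (A ^ k).map ((↑) : ℝ → ℂ) = A.map (↑) ^ k from map_pow Complex.ofRealHom.mapMatrix A k]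
    exact hpow k
  calc ‖(A ^ k) *ᵥ v‖ ≤ ‖A ^ k‖ * ‖v‖ := linfty_opNorm_mulVec _ _
    _ ≤ C * (r : ℝ) ^ k * ‖v‖ := by gcongr

end LinftyOpNorm

theorem stmt_19_general {d : ℕ} (A : Matrix (Fin d) (Fin d) ℝ)
    (hA : spectralRadius ℂ (A.map fun r : ℝ => (r : ℂ)) < 1)
    (τ : ℝ → ℝ)
    (nfun : ℝ → ℕ) (hn : ∀ t : ℝ, t ∈ Dset τ (nfun t) ∧ t ∉ Dset τ (nfun t + 1))
    (α β : ℝ) (hα : 0 < α) (hlb : ∀ t : ℝ, 0 ≤ t → α * t + β ≤ (nfun t : ℝ)) :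
    ∃ C > (0 : ℝ), ∃ γ > (0 : ℝ), ∀ x : ℝ → Fin d → ℝ,
      (∀ t : ℝ, 0 ≤ t → x t = A.mulVec (x (t - τ t))) →
      ∀ M : ℝ, (∀ s : ℝ, InNegDom τ s → ‖x s‖ ≤ M) →
      ∀ t : ℝ, 0 ≤ t → ‖x t‖ ≤ C * Real.exp (-γ * t) * M := by
  obtain ⟨r, hAr, hr1⟩ := ENNReal.lt_iff_exists_nnreal_btwn.1 hA
  have hr₀ : (0 : ℝ) < r := NNReal.coe_pos.2 (ENNReal.coe_pos.1 (pos_of_gt hAr))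
  have hr₁ : (r : ℝ) < 1 := by exact_mod_cast hr1
  obtain ⟨C, hC, hpow⟩ := A.exists_norm_pow_mulVec_le_of_spectralRadius_lt hAr
  refine ⟨C * (r : ℝ) ^ β, by positivity, α * -Real.log r,
    mul_pos hα (neg_pos.2 (Real.log_neg hr₀ hr₁)), fun x hx M hM t ht => ?_⟩
  obtain ⟨hmem, hnot⟩ := hn t
  have hxM : ‖x (iterDelay τ (nfun t) t)‖ ≤ M := hM _ (inNegDom_iterDelay ht hmem hnot)
  have hdecay : (r : ℝ) ^ nfun t ≤ (r : ℝ) ^ β * Real.exp (-(α * -Real.log r) * t) := by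
    calc (r : ℝ) ^ nfun t ≤ (r : ℝ) ^ (α * t + β) := by
          rw [← Real.rpow_natCast]
          exact Real.rpow_le_rpow_of_exponent_ge hr₀ hr₁.le (hlb t ht)
      _ = (r : ℝ) ^ β * Real.exp (-(α * -Real.log r) * t) := by
          rw [Real.rpow_add hr₀, Real.rpow_def_of_pos hr₀ (α * t), mul_comm]
          ring_nf
  calc ‖x t‖ = ‖(A ^ nfun t) *ᵥ x (iterDelay τ (nfun t) t)‖ := by
        rw [← eq_pow_mulVec_iterDelay_of_mem_Dset hx hmem]
    _ ≤ C * (r : ℝ) ^ nfun t * ‖x (iterDelay τ (nfun t) t)‖ := hpow _ _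
    _ ≤ C * ((r : ℝ) ^ β * Real.exp (-(α * -Real.log r) * t)) * M := by gcongr
    _ = C * (r : ℝ) ^ β * Real.exp (-(α * -Real.log r) * t) * M := by ring

/-- Exponential decay: if the spectral radius of `A` is `< 1`, `τ` is a delay function with
`inf_{s ∈ [0,t]} τ(s) > 0` for all `t ≥ 0`, and `n(t) ≥ α·t + β` for some `α > 0`, `β ∈ ℝ`
and all `t ≥ 0`, then there are `C > 0` and `γ > 0` such that every solution `x` of
`x(t) = A·x(t − τ(t))` with initial condition bounded by `M` on `[−h(0), 0)` satisfies
`|x(t)| ≤ C·e^{−γt}·M` for all `t ≥ 0`. -/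
theorem stmt_19 {d : ℕ} (A : Matrix (Fin d) (Fin d) ℝ)
    (hA : spectralRadius ℂ (A.map fun r : ℝ => (r : ℂ)) < 1)
    (τ : ℝ → ℝ) (hτ : ∀ t : ℝ, 0 ≤ t → 0 < τ t)
    (hinf : ∀ t : ℝ, 0 ≤ t → ∃ δ > (0 : ℝ), ∀ s ∈ Set.Icc (0 : ℝ) t, δ ≤ τ s)
    (nfun : ℝ → ℕ) (hn : ∀ t : ℝ, t ∈ Dset τ (nfun t) ∧ t ∉ Dset τ (nfun t + 1))
    (α β : ℝ) (hα : 0 < α) (hlb : ∀ t : ℝ, 0 ≤ t → α * t + β ≤ (nfun t : ℝ)) :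
    ∃ C > (0 : ℝ), ∃ γ > (0 : ℝ), ∀ x : ℝ → Fin d → ℝ,
      (∀ t : ℝ, 0 ≤ t → x t = A.mulVec (x (t - τ t))) →
      ∀ M : ℝ, (∀ s : ℝ, InNegDom τ s → ‖x s‖ ≤ M) →
      ∀ t : ℝ, 0 ≤ t → ‖x t‖ ≤ C * Real.exp (-γ * t) * M :=
  stmt_19_general A hA τ nfun hn α β hα hlb
end
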